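/- arXiv:2401.07076 — 8 statements merged into one kernel-verified Lean document; each statement's English description precedes it below -/
import Mathlib

section
/- If the dual ball of a Banach space Y is fragmentable by some metric in the weak* topology, then Y is a weak Asplund space, i.e., every continuous convex function on Y is Gâteaux differentiable at each point of a dense G_delta subset of Y. -/
/-!
The subdifferential `∂f` of a continuous convex function is a weak*-usco: nonempty by
Hahn–Banach, and locally contained in a dual ball, hence weak*-compact-valued by Banach–Alaoglu.
By Zorn it contains a minimal usco `Φ`. Near each point `Φ` takes values in some ball
`(k + 1) • B`, which the rescaled metric fragments, and minimality upgrades this to: every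
nonempty open set contains a nonempty open set over which `Φ` has small diameter. By Baire, `Φ`
is single-valued on a dense `Gδ` set, and where `Φ x = {φ₀}` upper semicontinuity squeezes the
difference quotients of `f` in every direction `v` onto `φ₀ v`.
-/

/-- `ρ` is a metric on the subtype of `B`. -/
def IsMetricOn {X : Type*} (B : Set X) (ρ : X → X → ℝ) : Prop :=
  (∀ x ∈ B, ∀ y ∈ B, 0 ≤ ρ x y) ∧
  (∀ x ∈ B, ∀ y ∈ B, (ρ x y = 0 ↔ x = y)) ∧
  (∀ x ∈ B, ∀ y ∈ B, ρ x y = ρ y x) ∧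
  (∀ x ∈ B, ∀ y ∈ B, ∀ z ∈ B, ρ x z ≤ ρ x y + ρ y z)

/-- A set `B` in a topological space is fragmented by `ρ`: every nonempty subset `A`
of `B` has a relatively open nonempty piece of arbitrarily small `ρ`-diameter. -/
def FragmentedBy {X : Type*} [TopologicalSpace X] (B : Set X) (ρ : X → X → ℝ) : Prop :=
  ∀ ε > (0 : ℝ), ∀ A ⊆ B, A.Nonempty →
    ∃ U : Set X, IsOpen U ∧ (U ∩ A).Nonempty ∧
      ∀ x ∈ U ∩ A, ∀ y ∈ U ∩ A, ρ x y < ε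

/-- `f` is Gâteaux differentiable at `x`. -/
def GateauxDifferentiableAt {Y : Type*} [NormedAddCommGroup Y] [NormedSpace ℝ Y]
    (f : Y → ℝ) (x : Y) : Prop :=
  ∃ L : Y →L[ℝ] ℝ, ∀ v : Y, HasDerivAt (fun t : ℝ => f (x + t • v)) (L v) 0

/-- A Banach space is weak Asplund if every continuous convex function on it is
Gâteaux differentiable at each point of a dense `Gδ` set. -/
def WeakAsplundSpace (Y : Type) [NormedAddCommGroup Y] [NormedSpace ℝ Y] : Prop :=
  ∀ f : Y → ℝ, Continuous f → ConvexOn ℝ Set.univ f →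
    ∃ D : Set Y, Dense D ∧ IsGδ D ∧ ∀ x ∈ D, GateauxDifferentiableAt f x

open Set Filter Topology Metric

section Usco

variable {X Z : Type*} [TopologicalSpace X] [TopologicalSpace Z]

structure IsUsco (Φ : X → Set Z) : Prop where
  nonempty : ∀ x, (Φ x).Nonempty
  isCompact : ∀ x, IsCompact (Φ x)
  eventually_subset : ∀ x {W : Set Z}, IsOpen W → Φ x ⊆ W → ∀ᶠ z in 𝓝 x, Φ z ⊆ W

theorem IsUsco.isOpen_setOf_subset {Φ : X → Set Z} (hΦ : IsUsco Φ) {W : Set Z} (hW : IsOpen W) :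
    IsOpen {x | Φ x ⊆ W} :=
  isOpen_iff_mem_nhds.mpr fun x hx => hΦ.eventually_subset x hW hx

theorem IsUsco.tendsto_of_subset_singleton {Φ : X → Set Z} (hΦ : IsUsco Φ) {x : X} {z₀ : Z}
    (hx : Φ x ⊆ {z₀}) {s : X → Z} (hs : ∀ x, s x ∈ Φ x) : Tendsto s (𝓝 x) (𝓝 z₀) :=
  (nhds_basis_opens z₀).tendsto_right_iff.mpr fun _ ⟨hz₀, hW⟩ =>
    (hΦ.eventually_subset x hW (hx.trans (singleton_subset_iff.mpr hz₀))).mono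
      fun z hz => hz (hs z)

theorem eventually_subset_of_isClosed_graph {Φ : X → Set Z} {x : X} {K : Set Z}
    (hK : IsCompact K) (hΦK : ∀ᶠ z in 𝓝 x, Φ z ⊆ K)
    (hgraph : IsClosed (univ ×ˢ K ∩ {p : X × Z | p.2 ∈ Φ p.1}))
    {W : Set Z} (hW : IsOpen W) (hxW : Φ x ⊆ W) : ∀ᶠ z in 𝓝 x, Φ z ⊆ W := by
  obtain ⟨u, v, hu, -, hxu, hKv, huv⟩ := generalized_tube_lemma isCompact_singleton
    (hK.diff hW) hgraph.isOpen_compl (by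
      rintro ⟨z, φ⟩ ⟨rfl, hφK, hφW⟩ ⟨-, hφ⟩
      exact hφW (hxW hφ))
  filter_upwards [hΦK, hu.mem_nhds (hxu rfl)] with z hzK hzu φ hφ
  by_contra hφW
  exact huv (mk_mem_prod hzu (hKv ⟨hzK hφ, hφW⟩)) ⟨⟨mem_univ z, hzK hφ⟩, hφ⟩

open scoped Classical in
theorem IsUsco.piecewise_diff {Φ : X → Set Z} (hΦ : IsUsco Φ) {O : Set X} (hO : IsOpen O)
    {W : Set Z} (hW : IsOpen W) (hOW : ∀ x ∈ O, ¬Φ x ⊆ W) :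
    IsUsco (O.piecewise (fun x => Φ x \ W) Φ) := by
  refine ⟨fun x => ?_, fun x => ?_, fun x V hV hxV => ?_⟩
  · by_cases hx : x ∈ O
    · simpa [hx, sdiff_nonempty] using hOW x hx
    · simpa [hx] using hΦ.nonempty x
  · by_cases hx : x ∈ O
    · simpa [hx] using (hΦ.isCompact x).diff hW
    · simpa [hx] using hΦ.isCompact x
  · by_cases hx : x ∈ O
    · rw [piecewise_eq_of_mem _ _ _ hx, sdiff_subset_iff, union_comm] at hxV
      filter_upwards [hΦ.eventually_subset x (hV.union hW) hxV, hO.mem_nhds hx] with z hz hzO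
      rw [piecewise_eq_of_mem _ _ _ hzO, sdiff_subset_iff, union_comm]
      exact hz
    · rw [piecewise_eq_of_notMem _ _ _ hx] at hxV
      filter_upwards [hΦ.eventually_subset x hV hxV] with z hz
      exact (piecewise_le (fun _ _ => sdiff_subset) (fun _ _ => subset_rfl) z).trans hz

theorem Minimal.exists_isOpen_forall_subset {Φ : X → Set Z} (hΦ : Minimal IsUsco Φ)
    {O : Set X} (hO : IsOpen O) {W : Set Z} (hW : IsOpen W) {x₀ : X} (hx₀ : x₀ ∈ O)
    (hne : (Φ x₀ ∩ W).Nonempty) :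
    ∃ V, IsOpen V ∧ V.Nonempty ∧ V ⊆ O ∧ ∀ z ∈ V, Φ z ⊆ W := by
  classical
  -- if that set were empty, deleting `W` from the values over `O` would give a smaller usco
  refine ⟨O ∩ {z | Φ z ⊆ W}, hO.inter (hΦ.prop.isOpen_setOf_subset hW), ?_,
    inter_subset_left, fun z hz => hz.2⟩
  by_contra hempty
  have hOW : ∀ x ∈ O, ¬Φ x ⊆ W := fun x hx hxW => hempty ⟨x, hx, hxW⟩
  have hle := hΦ.le_of_le (hΦ.prop.piecewise_diff hO hW hOW)
    (piecewise_le (fun _ _ => sdiff_subset) fun _ _ => subset_rfl)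
  obtain ⟨φ, hφ, hφW⟩ := hne
  have := hle x₀ hφ
  rw [piecewise_eq_of_mem _ _ _ hx₀] at this
  exact this.2 hφW

variable [T2Space Z]

theorem IsUsco.iInter_of_isChain {c : Set (X → Set Z)} (hc : IsChain (· ≥ ·) c) [Nonempty c]
    (h : ∀ Ψ ∈ c, IsUsco Ψ) : IsUsco fun x => ⋂ Ψ : c, (Ψ : X → Set Z) x := by
  have hdir : ∀ x, Directed (· ⊇ ·) fun Ψ : c => (Ψ : X → Set Z) x := fun x =>
    Directed.mono_comp (· ≥ ·) (g := fun Ψ : X → Set Z => Ψ x) (fun _ _ hle => hle x)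
      hc.directedOn.directed_val
  obtain ⟨Ψ₀⟩ := ‹Nonempty c›
  refine ⟨fun x => ?_, fun x => ?_, fun x W hW hsub => ?_⟩
  · exact IsCompact.nonempty_iInter_of_directed_nonempty_isCompact_isClosed _ (hdir x)
      (fun Ψ => (h Ψ Ψ.2).nonempty x) (fun Ψ => (h Ψ Ψ.2).isCompact x)
      (fun Ψ => ((h Ψ Ψ.2).isCompact x).isClosed)
  · exact ((h Ψ₀ Ψ₀.2).isCompact x).of_isClosed_subset
      (isClosed_iInter fun Ψ => ((h Ψ Ψ.2).isCompact x).isClosed) (iInter_subset _ Ψ₀)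
  · obtain ⟨Ψ, hΨ⟩ := exists_subset_nhds_of_isCompact (hdir x)
      (fun Ψ => (h Ψ Ψ.2).isCompact x) fun φ hφ => hW.mem_nhds (hsub hφ)
    exact ((h Ψ Ψ.2).eventually_subset x hW hΨ).mono fun z hz => (iInter_subset _ Ψ).trans hz

theorem IsUsco.exists_minimal_le {Φ₀ : X → Set Z} (hΦ₀ : IsUsco Φ₀) :
    ∃ Φ ≤ Φ₀, Minimal IsUsco Φ := by
  refine zorn_le_nonempty₀ (α := (X → Set Z)ᵒᵈ) {Ψ | IsUsco Ψ} (fun c hcu hc Ψ hΨ => ?_) Φ₀ hΦ₀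
  let c' : Set (X → Set Z) := c
  have : Nonempty c' := ⟨⟨Ψ, hΨ⟩⟩
  exact ⟨fun x => ⋂ Ψ : c', (Ψ : X → Set Z) x, IsUsco.iInter_of_isChain hc hcu,
    fun Ψ hΨ x => iInter_subset_of_subset ⟨Ψ, hΨ⟩ subset_rfl⟩

end Usco

section Fragmentability

variable {X X' : Type*} [TopologicalSpace X] [TopologicalSpace X']

theorem FragmentedBy.comp {B : Set X'} {ρ : X' → X' → ℝ} (hB : FragmentedBy B ρ)
    {h : X → X'} (hh : Continuous h) {S : Set X} (hS : MapsTo h S B) :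
    FragmentedBy S fun a b => ρ (h a) (h b) := by
  intro ε hε A hA hAne
  obtain ⟨U, hU, ⟨_, hbU, a, ha, rfl⟩, hsmall⟩ :=
    hB ε hε (h '' A) (image_subset_iff.mpr fun a ha => hS (hA ha)) (hAne.image h)
  exact ⟨h ⁻¹' U, hU.preimage hh, ⟨a, hbU, ha⟩,
    fun x hx y hy => hsmall _ ⟨hx.1, mem_image_of_mem h hx.2⟩ _ ⟨hy.1, mem_image_of_mem h hy.2⟩⟩

end Fragmentability

theorem IsMetricOn.comp {X X' : Type*} {B : Set X'} {ρ : X' → X' → ℝ} (hρ : IsMetricOn B ρ)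
    {h : X → X'} {S : Set X} (hS : MapsTo h S B) (hinj : InjOn h S) :
    IsMetricOn S fun a b => ρ (h a) (h b) := by
  obtain ⟨hnonneg, heq, hsymm, htri⟩ := hρ
  exact ⟨fun x hx y hy => hnonneg _ (hS hx) _ (hS hy),
    fun x hx y hy => (heq _ (hS hx) _ (hS hy)).trans (hinj.eq_iff hx hy),
    fun x hx y hy => hsymm _ (hS hx) _ (hS hy),
    fun x hx y hy z hz => htri _ (hS hx) _ (hS hy) _ (hS hz)⟩

section SmallOscillation

variable {X Z : Type*} [TopologicalSpace X]

def smallOscillationSet (Φ : X → Set Z) (σ : Z → Z → ℝ) (ε : ℝ) : Set X :=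
  ⋃₀ {U | IsOpen U ∧ ∀ z₁ ∈ U, ∀ z₂ ∈ U, ∀ φ ∈ Φ z₁, ∀ ψ ∈ Φ z₂, σ φ ψ < ε}

theorem isOpen_smallOscillationSet (Φ : X → Set Z) (σ : Z → Z → ℝ) (ε : ℝ) :
    IsOpen (smallOscillationSet Φ σ ε) :=
  isOpen_sUnion fun _ hU => hU.1

variable [TopologicalSpace Z] {Φ : X → Set Z} {S : Set Z} {σ : Z → Z → ℝ} {ε : ℝ}

theorem Minimal.inter_smallOscillationSet_nonempty (hΦ : Minimal IsUsco Φ) {O : Set X}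
    (hO : IsOpen O) (hOne : O.Nonempty) (hS : ∀ x ∈ O, Φ x ⊆ S) (hfrag : FragmentedBy S σ)
    (hε : 0 < ε) : (O ∩ smallOscillationSet Φ σ ε).Nonempty := by
  obtain ⟨x₁, hx₁⟩ := hOne
  obtain ⟨W, hW, ⟨φ, hφW, hφA⟩, hsmall⟩ := hfrag ε hε (⋃ x ∈ O, Φ x) (iUnion₂_subset hS)
    ⟨_, mem_biUnion hx₁ (hΦ.prop.nonempty x₁).some_mem⟩
  obtain ⟨x₀, hx₀, hφx₀⟩ := mem_iUnion₂.mp hφA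
  obtain ⟨V, hV, ⟨v, hv⟩, hVO, hVW⟩ := hΦ.exists_isOpen_forall_subset hO hW hx₀ ⟨φ, hφx₀, hφW⟩
  exact ⟨v, hVO hv, V, ⟨hV, fun z₁ hz₁ z₂ hz₂ φ hφ ψ hψ =>
    hsmall φ ⟨hVW z₁ hz₁ hφ, mem_biUnion (hVO hz₁) hφ⟩ ψ ⟨hVW z₂ hz₂ hψ, mem_biUnion (hVO hz₂) hψ⟩⟩,
    hv⟩

theorem Minimal.dense_compl_closure_union_smallOscillationSet (hΦ : Minimal IsUsco Φ)
    {O : Set X} (hO : IsOpen O) (hS : ∀ x ∈ O, Φ x ⊆ S) (hfrag : FragmentedBy S σ)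
    (hε : 0 < ε) : Dense ((closure O)ᶜ ∪ smallOscillationSet Φ σ ε) := by
  refine dense_iff_inter_open.mpr fun O' hO' ⟨x, hx⟩ => ?_
  by_cases hO'O : O' ⊆ closure O
  · obtain ⟨v, ⟨hvO', -⟩, hv⟩ := hΦ.inter_smallOscillationSet_nonempty (hO'.inter hO)
      (mem_closure_iff.mp (hO'O hx) O' hO' hx) (fun x hx => hS x hx.2) hfrag hε
    exact ⟨v, hvO', Or.inr hv⟩
  · obtain ⟨y, hyO', hy⟩ := not_subset.mp hO'O
    exact ⟨y, hyO', Or.inl hy⟩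

theorem Minimal.exists_dense_isGδ_subsingleton [BaireSpace X] {ι : Type*} [Countable ι]
    (hΦ : Minimal IsUsco Φ) {O : ι → Set X} (hO : ∀ k, IsOpen (O k))
    (hcover : ∀ x, ∃ k, x ∈ O k) {S : ι → Set Z} (hS : ∀ k, ∀ x ∈ O k, Φ x ⊆ S k)
    {σ : ι → Z → Z → ℝ} (hσ : ∀ k, IsMetricOn (S k) (σ k))
    (hfrag : ∀ k, FragmentedBy (S k) (σ k)) :
    ∃ D, Dense D ∧ IsGδ D ∧ ∀ x ∈ D, (Φ x).Subsingleton := by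
  set G : ι × ℕ → Set X := fun p =>
    (closure (O p.1))ᶜ ∪ smallOscillationSet Φ (σ p.1) (1 / (p.2 + 1))
  have hG : ∀ p, IsOpen (G p) := fun p =>
    isClosed_closure.isOpen_compl.union (isOpen_smallOscillationSet _ _ _)
  refine ⟨⋂ p, G p, dense_iInter_of_isOpen hG fun p =>
      hΦ.dense_compl_closure_union_smallOscillationSet (hO p.1) (hS p.1) (hfrag p.1)
        Nat.one_div_pos_of_nat,
    .iInter_of_isOpen hG, fun x hx φ hφ ψ hψ => ?_⟩
  obtain ⟨k, hk⟩ := hcover x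
  have hlt : ∀ n : ℕ, σ k φ ψ < 1 / (n + 1) := fun n => by
    obtain hx' | ⟨U, ⟨-, hsmall⟩, hxU⟩ := mem_iInter.mp hx (k, n)
    · exact absurd (subset_closure hk) hx'
    · exact hsmall x hxU x hxU φ hφ ψ hψ
  have hφS := hS k x hk hφ
  have hψS := hS k x hk hψ
  refine ((hσ k).2.1 φ hφS ψ hψS).mp (le_antisymm ?_ ((hσ k).1 φ hφS ψ hψS))
  refine le_of_forall_pos_lt_add fun δ hδ => ?_
  obtain ⟨n, hn⟩ := exists_nat_one_div_lt hδ
  linarith [hlt n]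

end SmallOscillation

theorem hasDerivAt_zero_of_le_of_le {g b : ℝ → ℝ} {a : ℝ} (h₁ : ∀ t, g 0 + t * a ≤ g t)
    (h₂ : ∀ t, g t - t * b t ≤ g 0) (hb : Tendsto b (𝓝 0) (𝓝 a)) : HasDerivAt g a 0 := by
  rw [hasDerivAt_iff_isLittleO, Asymptotics.isLittleO_iff]
  intro ε hε
  filter_upwards [Metric.tendsto_nhds.mp hb ε hε] with t ht
  rw [Real.dist_eq] at ht
  simp only [sub_zero, smul_eq_mul, Real.norm_eq_abs]
  have hupper : g t - g 0 - t * a ≤ |t| * ε := calc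
    g t - g 0 - t * a ≤ t * (b t - a) := by linarith [h₂ t]
    _ ≤ |t| * |b t - a| := by rw [← abs_mul]; exact le_abs_self _
    _ ≤ |t| * ε := by gcongr
  rw [abs_of_nonneg (by linarith [h₁ t])]
  linarith

section Subdifferential

variable {Y : Type*} [NormedAddCommGroup Y] [NormedSpace ℝ Y]

def weakDualClosedBall (r : ℝ) : Set (WeakDual ℝ Y) :=
  WeakDual.toStrongDual ⁻¹' closedBall 0 r

theorem abs_apply_le_of_mem_weakDualClosedBall {r : ℝ} {φ : WeakDual ℝ Y}
    (hφ : φ ∈ weakDualClosedBall r) (y : Y) : |φ y| ≤ r * ‖y‖ :=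
  (WeakDual.toStrongDual φ).le_of_opNorm_le (mem_closedBall_zero_iff.mp hφ) y

theorem isCompact_weakDualClosedBall (r : ℝ) : IsCompact (weakDualClosedBall (Y := Y) r) :=
  WeakDual.isCompact_closedBall 0 r

theorem mapsTo_inv_smul_weakDualClosedBall {r : ℝ} (hr : 0 < r) :
    MapsTo (r⁻¹ • ·) (weakDualClosedBall r) {φ : WeakDual ℝ Y | ∀ y, |φ y| ≤ ‖y‖} := by
  intro φ hφ y
  change |r⁻¹ * φ y| ≤ ‖y‖
  rw [abs_mul, abs_inv, abs_of_pos hr, inv_mul_le_iff₀ hr]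
  exact abs_apply_le_of_mem_weakDualClosedBall hφ y

theorem continuousOn_apply_weakDualClosedBall (r : ℝ) :
    ContinuousOn (fun p : Y × WeakDual ℝ Y => p.2 p.1) (univ ×ˢ weakDualClosedBall r) := by
  rintro ⟨x₀, φ₀⟩ -
  have hsmall : Tendsto (fun p : Y × WeakDual ℝ Y => p.2 (p.1 - x₀))
      (𝓝[univ ×ˢ weakDualClosedBall r] (x₀, φ₀)) (𝓝 0) := by
    have hbound : Tendsto (fun p : Y × WeakDual ℝ Y => r * ‖p.1 - x₀‖) (𝓝 (x₀, φ₀)) (𝓝 0) :=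
      (by fun_prop : Continuous fun p : Y × WeakDual ℝ Y => r * ‖p.1 - x₀‖).tendsto' _ _
        (by simp)
    refine squeeze_zero_norm' ?_ (tendsto_nhdsWithin_of_tendsto_nhds hbound)
    filter_upwards [self_mem_nhdsWithin] with p hp
    exact abs_apply_le_of_mem_weakDualClosedBall hp.2 _
  have heval : Tendsto (fun p : Y × WeakDual ℝ Y => p.2 x₀)
      (𝓝[univ ×ˢ weakDualClosedBall r] (x₀, φ₀)) (𝓝 (φ₀ x₀)) :=
    ((WeakDual.eval_continuous x₀).comp continuous_snd).continuousWithinAt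
  unfold ContinuousWithinAt
  simpa using hsmall.add heval

def subdifferential (f : Y → ℝ) (x : Y) : Set (WeakDual ℝ Y) :=
  {φ | ∀ y, f x + φ (y - x) ≤ f y}

theorem isClosed_subdifferential (f : Y → ℝ) (x : Y) : IsClosed (subdifferential f x) := by
  simp only [subdifferential, ofPred_forall]
  exact isClosed_iInter fun y =>
    isClosed_le (continuous_const.add (WeakDual.eval_continuous _)) continuous_const

variable {f : Y → ℝ}

theorem apply_le_of_mem_subdifferential {x : Y} {φ : WeakDual ℝ Y}
    (hφ : φ ∈ subdifferential f x) (v : Y) : φ v ≤ f (x + v) - f x := by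
  have := hφ (x + v)
  rw [add_sub_cancel_left] at this
  linarith

/-- Only the bounded part of the graph is closed: `(x, φ) ↦ φ x` is not jointly continuous on
`Y × WeakDual ℝ Y`. -/
theorem isClosed_graph_subdifferential_inter (hf : Continuous f) (r : ℝ) :
    IsClosed (univ ×ˢ weakDualClosedBall r ∩
      {p : Y × WeakDual ℝ Y | p.2 ∈ subdifferential f p.1}) := by
  have hS : IsClosed ((univ : Set Y) ×ˢ weakDualClosedBall (Y := Y) r) :=
    isClosed_univ.prod (isCompact_weakDualClosedBall r).isClosed
  have hgraph : univ ×ˢ weakDualClosedBall r ∩ {p : Y × WeakDual ℝ Y | p.2 ∈ subdifferential f p.1}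
      = ⋂ y, univ ×ˢ weakDualClosedBall r ∩
        (fun p : Y × WeakDual ℝ Y => f p.1 + p.2 (y - p.1)) ⁻¹' Iic (f y) := by
    ext p
    simp [subdifferential, forall_and_left]
  rw [hgraph]
  refine isClosed_iInter fun y => ContinuousOn.preimage_isClosed_of_isClosed ?_ hS isClosed_Iic
  refine (hf.comp continuous_fst).continuousOn.add ?_
  exact (continuousOn_apply_weakDualClosedBall r).comp
    (by fun_prop : Continuous fun p : Y × WeakDual ℝ Y => (y - p.1, p.2)).continuousOn
    fun p hp => ⟨mem_univ _, hp.2⟩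

theorem exists_eventually_subdifferential_subset {x : Y} (hf : ContinuousAt f x) :
    ∃ r, ∀ᶠ z in 𝓝 x, subdifferential f z ⊆ weakDualClosedBall r := by
  obtain ⟨δ, hδ, hfδ⟩ := Metric.continuousAt_iff.mp hf 1 one_pos
  refine ⟨2 / (δ / 4), ?_⟩
  filter_upwards [ball_mem_nhds x (half_pos hδ)] with z hz φ hφ
  rw [mem_ball] at hz
  have hle : ∀ v ∈ closedBall (0 : Y) (δ / 4), φ v ≤ 2 := by
    intro v hv
    rw [mem_closedBall_zero_iff] at hv
    have h₁ := hfδ (x := z + v) (by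
      calc dist (z + v) x ≤ dist (z + v) z + dist z x := dist_triangle _ _ _
        _ < δ := by rw [dist_self_add_left]; linarith)
    have h₂ := hfδ (x := z) (by linarith)
    rw [Real.dist_eq, abs_lt] at h₁ h₂
    linarith [apply_le_of_mem_subdifferential hφ v]
  refine mem_closedBall_zero_iff.mpr (ContinuousLinearMap.opNorm_bound_of_ball_bound
    (by positivity) 2 _ fun v hv => ?_)
  have hneg := hle (-v) (by simpa using hv)
  rw [map_neg] at hneg
  change |φ v| ≤ 2
  exact abs_le.mpr ⟨by linarith, hle v hv⟩

/-- A supporting hyperplane to the open strict epigraph at `(x, f x)` (Hahn–Banach) is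
non-vertical, hence the graph of a subgradient. -/
theorem subdifferential_nonempty (hf : Continuous f) (hc : ConvexOn ℝ univ f) (x : Y) :
    (subdifferential f x).Nonempty := by
  have hopen : IsOpen {p : Y × ℝ | p.1 ∈ univ ∧ f p.1 < p.2} := by
    simpa using isOpen_lt (hf.comp continuous_fst) continuous_snd
  obtain ⟨F, hF⟩ := geometric_hahn_banach_open_point hc.convex_strict_epigraph hopen
    (by simp : (x, f x) ∉ _)
  set g : StrongDual ℝ Y := F.comp (ContinuousLinearMap.inl ℝ Y ℝ)
  set c : ℝ := F (0, 1)
  have hF_apply : ∀ y t, F (y, t) = g y + t * c := fun y t => by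
    rw [show ((y, t) : Y × ℝ) = (y, 0) + t • (0, 1) by simp, map_add, map_smul, smul_eq_mul]
    rfl
  have hlt : ∀ y t, f y < t → g y + t * c < g x + f x * c := fun y t hyt => by
    simpa only [hF_apply] using hF (y, t) ⟨mem_univ y, hyt⟩
  have hc : c < 0 := by linarith [hlt x (f x + 1) (by linarith)]
  have hle : ∀ y, g y + f y * c ≤ g x + f x * c := fun y =>
    le_of_forall_pos_lt_add fun ε hε => by
      have hlt' := hlt y (f y + ε / -c) (by have := div_pos hε (neg_pos.mpr hc); linarith)
      have hshift : (f y + ε / -c) * c = f y * c - ε := by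
        rw [add_mul, div_mul_eq_mul_div, div_neg, mul_div_cancel_right₀ _ hc.ne]
        ring
      linarith
  refine ⟨StrongDual.toWeakDual ((-c)⁻¹ • g), fun y => ?_⟩
  change f x + (-c)⁻¹ * g (y - x) ≤ f y
  have := hle y
  rw [map_sub, ← le_sub_iff_add_le', inv_mul_le_iff₀ (neg_pos.mpr hc)]
  nlinarith

theorem isUsco_subdifferential (hf : Continuous f) (hc : ConvexOn ℝ univ f) :
    IsUsco (subdifferential f) where
  nonempty := subdifferential_nonempty hf hc
  isCompact x := by
    obtain ⟨r, hr⟩ := exists_eventually_subdifferential_subset hf.continuousAt (x := x)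
    exact (isCompact_weakDualClosedBall r).of_isClosed_subset (isClosed_subdifferential f x)
      hr.self_of_nhds
  eventually_subset x _ hW hxW := by
    obtain ⟨r, hr⟩ := exists_eventually_subdifferential_subset hf.continuousAt (x := x)
    exact eventually_subset_of_isClosed_graph (isCompact_weakDualClosedBall r) hr
      (isClosed_graph_subdifferential_inter hf r) hW hxW

theorem exists_mem_interior_setOf_subdifferential_subset {x : Y} (hf : ContinuousAt f x) :
    ∃ k : ℕ, x ∈ interior {z | subdifferential f z ⊆ weakDualClosedBall ((k : ℝ) + 1)} := by
  obtain ⟨r, hr⟩ := exists_eventually_subdifferential_subset hf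
  obtain ⟨k, hk⟩ := exists_nat_ge r
  refine ⟨k, mem_interior_iff_mem_nhds.mpr (hr.mono fun z hz => hz.trans ?_)⟩
  exact preimage_mono (closedBall_subset_closedBall (by linarith))

theorem gateauxDifferentiableAt_of_isUsco_of_eq_singleton {Φ : Y → Set (WeakDual ℝ Y)}
    (hΦ : IsUsco Φ) (hΦf : Φ ≤ subdifferential f) {x : Y} {φ₀ : WeakDual ℝ Y} (hx : Φ x = {φ₀}) :
    GateauxDifferentiableAt f x := by
  choose s hs using hΦ.nonempty
  have hφ₀ : φ₀ ∈ subdifferential f x := hΦf x (hx ▸ mem_singleton φ₀)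
  refine ⟨WeakDual.toStrongDual φ₀, fun v => ?_⟩
  have hline : Tendsto (fun t : ℝ => x + t • v) (𝓝 0) (𝓝 x) :=
    (by fun_prop : Continuous fun t : ℝ => x + t • v).tendsto' _ _ (by simp)
  refine hasDerivAt_zero_of_le_of_le (b := fun t => s (x + t • v) v) (fun t => ?_) (fun t => ?_)
    ((WeakDual.eval_continuous v).continuousAt.tendsto.comp
      ((hΦ.tendsto_of_subset_singleton hx.subset hs).comp hline))
  · have := apply_le_of_mem_subdifferential hφ₀ (t • v)
    rw [map_smul, smul_eq_mul] at this
    simp only [zero_smul, add_zero]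
    change f x + t * φ₀ v ≤ f (x + t • v)
    linarith
  · have := apply_le_of_mem_subdifferential (hΦf _ (hs (x + t • v))) (-(t • v))
    rw [map_neg, map_smul, smul_eq_mul, add_neg_cancel_right] at this
    simp only [zero_smul, add_zero]
    linarith

end Subdifferential

/-- If the dual unit ball of a Banach space `Y` is fragmentable by some metric in the
weak* topology, then `Y` is weak Asplund. -/
theorem weakAsplund_of_dual_ball_fragmentable
    (Y : Type) [NormedAddCommGroup Y] [NormedSpace ℝ Y] [CompleteSpace Y]
    (ρ : WeakDual ℝ Y → WeakDual ℝ Y → ℝ)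
    (B : Set (WeakDual ℝ Y))
    (hB : B = {φ : WeakDual ℝ Y | ∀ y : Y, |φ y| ≤ ‖y‖})
    (hmetric : IsMetricOn B ρ)
    (hfrag : FragmentedBy B ρ) :
    WeakAsplundSpace Y := by
  subst hB
  intro f hf hconv
  obtain ⟨Φ, hΦf, hΦ⟩ := (isUsco_subdifferential hf hconv).exists_minimal_le
  have hscale : ∀ k : ℕ, MapsTo (((k : ℝ) + 1)⁻¹ • ·) (weakDualClosedBall ((k : ℝ) + 1))
      {φ : WeakDual ℝ Y | ∀ y, |φ y| ≤ ‖y‖} := fun k =>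
    mapsTo_inv_smul_weakDualClosedBall (by positivity)
  obtain ⟨D, hD, hDGδ, hDΦ⟩ := hΦ.exists_dense_isGδ_subsingleton
    (O := fun k : ℕ => interior {z | subdifferential f z ⊆ weakDualClosedBall ((k : ℝ) + 1)})
    (fun _ => isOpen_interior)
    (fun x => exists_mem_interior_setOf_subdifferential_subset hf.continuousAt)
    (fun _ x hx => (hΦf x).trans (interior_subset hx :))
    (fun k => hmetric.comp (hscale k) (smul_right_injective _ (by positivity)).injOn)
    (fun k => hfrag.comp (continuous_const_smul _) (hscale k))
  refine ⟨D, hD, hDGδ, fun x hx => ?_⟩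
  obtain ⟨φ₀, hφ₀⟩ := hΦ.prop.nonempty x
  exact gateauxDifferentiableAt_of_isUsco_of_eq_singleton hΦ.prop hΦf
    ((hDΦ x hx).eq_singleton_of_mem hφ₀)
end

section
/- If A is a Q-set of reals (every subset of A is relatively G_delta in A) of cardinality ℵ₁, then 2^ℵ₀ = 2^ℵ₁. -/
open Cardinal

/-- `A ⊆ ℝ` is a Q-set: every subset of `A` is a relative `Gδ` subset of `A`. -/
def IsQSet (A : Set ℝ) : Prop :=
  ∀ B ⊆ A, ∃ S : Set ℝ, IsGδ S ∧ B = S ∩ A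

lemma mk_opens_le : #{S : Set ℝ // IsOpen S} ≤ 2 ^ aleph 0 := by
  obtain ⟨b, hbc, -, hb⟩ := TopologicalSpace.exists_countable_basis ℝ
  haveI := hbc.to_subtype
  have hinj : Function.Injective (fun S : {S : Set ℝ // IsOpen S} =>
      ({t | (t : Set ℝ) ⊆ S.1} : Set b)) := by
    intro S T h
    ext1
    rw [hb.open_eq_sUnion' S.2, hb.open_eq_sUnion' T.2]
    have hsets : {s | s ∈ b ∧ s ⊆ S.1} = {s | s ∈ b ∧ s ⊆ T.1} := by
      ext s
      refine and_congr_right fun hsb => ?_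
      exact Set.ext_iff.mp h ⟨s, hsb⟩
    exact congrArg Set.sUnion hsets
  calc #{S : Set ℝ // IsOpen S} ≤ #(Set b) := mk_le_of_injective hinj
    _ = 2 ^ #b := mk_set
    _ ≤ 2 ^ aleph 0 := by
        refine power_le_power_left two_ne_zero ?_
        simpa [aleph_zero] using mk_le_aleph0 (α := b)

lemma mk_gdelta_le : #{S : Set ℝ // IsGδ S} ≤ 2 ^ aleph 0 := by
  have : ∀ S : {S : Set ℝ // IsGδ S}, ∃ f : ℕ → {S : Set ℝ // IsOpen S},
      S.1 = ⋂ n, (f n).1 := by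
    intro S
    obtain ⟨f, hfo, hfe⟩ := isGδ_iff_eq_iInter_nat.mp S.2
    exact ⟨fun n => ⟨f n, hfo n⟩, hfe⟩
  choose F hF using this
  have hinj : Function.Injective F := by
    intro S T h
    ext1
    rw [hF S, hF T, h]
  calc #{S : Set ℝ // IsGδ S} ≤ #(ℕ → {S : Set ℝ // IsOpen S}) := mk_le_of_injective hinj
    _ = #{S : Set ℝ // IsOpen S} ^ (ℵ₀ : Cardinal) := by
        rw [mk_arrow]; simp
    _ ≤ (2 ^ aleph 0) ^ (ℵ₀ : Cardinal) := power_le_power_right mk_opens_le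
    _ = 2 ^ aleph 0 := by
        rw [← power_mul, aleph_zero]
        norm_num [mul_comm]

/-- If `A` is a Q-set of reals of cardinality `ℵ₁`, then `2^ℵ₀ = 2^ℵ₁`. -/
theorem qset_of_aleph_one_implies_continuum_eq (A : Set ℝ)
    (hQ : IsQSet A) (hcard : #A = aleph 1) :
    (2 : Cardinal) ^ aleph 0 = 2 ^ aleph 1 := by
  have h0 : (2 : Cardinal.{0}) ^ aleph 0 = 2 ^ aleph 1 := by
    refine le_antisymm (power_le_power_left two_ne_zero (aleph_le_aleph.mpr zero_le_one)) ?_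
    have key : ∀ B : Set A, ∃ S : {S : Set ℝ // IsGδ S},
        (Subtype.val '' B : Set ℝ) = S.1 ∩ A := by
      intro B
      obtain ⟨S, hS, hSe⟩ := hQ (Subtype.val '' B) (by rintro x ⟨y, -, rfl⟩; exact y.2)
      exact ⟨⟨S, hS⟩, hSe⟩
    choose F hF using key
    have hinj : Function.Injective F := by
      intro B C h
      have : (Subtype.val '' B : Set ℝ) = Subtype.val '' C := by rw [hF B, hF C, h]
      exact Set.image_injective.mpr Subtype.val_injective this
    calc (2 : Cardinal) ^ aleph 1 = 2 ^ #A := by rw [hcard]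
      _ = #(Set A) := mk_set.symm
      _ ≤ #{S : Set ℝ // IsGδ S} := mk_le_of_injective hinj
      _ ≤ 2 ^ aleph 0 := mk_gdelta_le
  have h1 := congrArg Cardinal.lift h0
  rw [lift_power, lift_power, lift_aleph, lift_aleph, lift_two, Ordinal.lift_zero,
    Ordinal.lift_one] at h1
  exact h1
end

section
/- A topological space is metrizable if and only if it is a collectionwise normal Moore space. -/
/-- A development for a topological space: a sequence of open covers `G n` such that
for every point `x` and open `U ∋ x` some `G n` has all its members containing `x`
inside `U`. -/
def IsDevelopment (X : Type) [TopologicalSpace X] (G : ℕ → Set (Set X)) : Prop :=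
  (∀ n, ∀ U ∈ G n, IsOpen U) ∧
  (∀ n, ∀ x : X, ∃ U ∈ G n, x ∈ U) ∧
  ∀ (x : X) (U : Set X), IsOpen U → x ∈ U →
    ∃ n, ∀ V ∈ G n, x ∈ V → V ⊆ U

/-- A Moore space: a regular Hausdorff space admitting a development. -/
def MooreSpace (X : Type) [TopologicalSpace X] : Prop :=
  T2Space X ∧ RegularSpace X ∧ ∃ G : ℕ → Set (Set X), IsDevelopment X G

/-- A family of sets is discrete: every point has a neighbourhood meeting at most one
member of the family. -/
def DiscreteFamily (X : Type) [TopologicalSpace X] {ι : Type} (F : ι → Set X) : Prop :=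
  ∀ x : X, ∃ V : Set X, IsOpen V ∧ x ∈ V ∧ {i | (V ∩ F i).Nonempty}.Subsingleton

/-- Collectionwise normality: every discrete family of closed sets can be separated by
a pairwise disjoint family of open sets. -/
def CollectionwiseNormal (X : Type) [TopologicalSpace X] : Prop :=
  ∀ (ι : Type) (F : ι → Set X), (∀ i, IsClosed (F i)) → DiscreteFamily X F →
    ∃ U : ι → Set X, (∀ i, IsOpen (U i)) ∧ (∀ i, F i ⊆ U i) ∧
      ∀ i j, i ≠ j → U i ∩ U j = ∅

/-! Well-order an open cover `s`. For each level `k` of a development `G`, the points whose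
`G k`-star lies in `s a` but which lie in no earlier `s b` form a discrete family of closed sets;
collectionwise normality expands it to a discrete open family inside `s`. Every open set of a
developable space is an `F_σ`, which lets normality turn this σ-discrete refinement into a locally
finite one, so `X` is paracompact. In a paracompact normal space every open cover has an open
barycentric refinement; refining a development in this way produces covers whose stars give a
countable base of a uniformity inducing the topology, so `X` is metrizable. Conversely, balls of
radius `1 / (n + 1)` form a development of a metric space, and comparing `infEDist` to one member
of a discrete closed family with `infEDist` to the union of the others separates the family. -/

open Set Filter Topology Function
open scoped SetRel Uniformity

section Bing

variable {X : Type} [TopologicalSpace X]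

namespace DiscreteFamily

variable {ι : Type} {F : ι → Set X}

theorem locallyFinite (hF : DiscreteFamily X F) : LocallyFinite F := fun x => by
  obtain ⟨V, hVo, hxV, hsub⟩ := hF x
  exact ⟨V, hVo.mem_nhds hxV, hsub.finite.subset fun i ⟨y, hyF, hyV⟩ => ⟨y, hyV, hyF⟩⟩

theorem mono {F' : ι → Set X} (hF : DiscreteFamily X F) (hF' : ∀ i, F' i ⊆ F i) :
    DiscreteFamily X F' := fun x => by
  obtain ⟨V, hVo, hxV, hsub⟩ := hF x
  exact ⟨V, hVo, hxV, hsub.anti fun i ⟨y, hyV, hy⟩ => ⟨y, hyV, hF' i hy⟩⟩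

theorem pairwise_disjoint (hF : DiscreteFamily X F) : Pairwise (Disjoint on F) :=
  fun i j hij => disjoint_left.2 fun x hxi hxj => by
    obtain ⟨V, -, hxV, hsub⟩ := hF x
    exact hij (hsub ⟨x, hxV, hxi⟩ ⟨x, hxV, hxj⟩)

end DiscreteFamily

theorem collectionwiseNormal_of_pseudoEMetricSpace {X : Type} [PseudoEMetricSpace X] :
    CollectionwiseNormal X := by
  intro ι F hFc (hFd : DiscreteFamily X F)
  set rest : ι → Set X := fun i => ⋃ j : {j // j ≠ i}, F j
  have hrest : ∀ i, IsClosed (rest i) := fun i =>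
    (hFd.locallyFinite.comp_injective Subtype.val_injective).isClosed_iUnion fun j => hFc j
  have hFrest : ∀ i j, j ≠ i → F j ⊆ rest i := fun i j hji =>
    subset_iUnion (fun j : {j // j ≠ i} => F j) ⟨j, hji⟩
  refine ⟨fun i => {x | Metric.infEDist x (F i) < Metric.infEDist x (rest i)},
    fun i => isOpen_lt Metric.continuous_infEDist Metric.continuous_infEDist,
    fun i x hx => ?_, fun i j hij => eq_empty_of_forall_notMem fun x ⟨hxi, hxj⟩ => ?_⟩
  · have hx' : x ∉ closure (rest i) := by
      rw [(hrest i).closure_eq]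
      rintro ⟨_, ⟨⟨j, hji⟩, rfl⟩, hxj⟩
      exact disjoint_left.1 (hFd.pairwise_disjoint hji) hxj hx
    simpa [Metric.infEDist_zero_of_mem hx] using Metric.infEDist_pos_iff_notMem_closure.2 hx'
  · have hij' := Metric.infEDist_anti (x := x) (hFrest i j hij.symm)
    have hji' := Metric.infEDist_anti (x := x) (hFrest j i hij)
    exact lt_irrefl _ (((hxi.trans_le hij').trans (show _ < _ from hxj)).trans_le hji')

theorem isDevelopment_ball {X : Type} [PseudoMetricSpace X] :
    IsDevelopment X fun n => range fun x : X => Metric.ball x (1 / (n + 1)) := by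
  refine ⟨?_, fun n x => ⟨_, mem_range_self x, Metric.mem_ball_self Nat.one_div_pos_of_nat⟩, ?_⟩
  · rintro n _ ⟨y, rfl⟩
    exact Metric.isOpen_ball
  · intro x U hU hxU
    obtain ⟨ε, hε, hball⟩ := Metric.isOpen_iff.1 hU x hxU
    obtain ⟨n, hn⟩ := exists_nat_one_div_lt (half_pos hε)
    refine ⟨n, ?_⟩
    rintro _ ⟨y, rfl⟩ hxy z hzy
    apply hball
    calc dist z x ≤ dist z y + dist x y := dist_triangle_right _ _ _
      _ < ε / 2 + ε / 2 := add_lt_add (hzy.trans hn) (hxy.trans hn)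
      _ = ε := add_halves ε

theorem CollectionwiseNormal.normalSpace (h : CollectionwiseNormal X) : NormalSpace X := by
  refine ⟨fun s t hs ht hst => ?_⟩
  have hd : DiscreteFamily X fun b : Bool => bif b then s else t := by
    intro x
    by_cases hx : x ∈ s
    · refine ⟨tᶜ, ht.isOpen_compl, disjoint_left.1 hst hx,
      (subsingleton_singleton (a := true)).anti ?_⟩
      rintro (_ | _) ⟨y, hyt, hy⟩
      exacts [(hyt hy).elim, rfl]
    · refine ⟨sᶜ, hs.isOpen_compl, hx, (subsingleton_singleton (a := false)).anti ?_⟩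
      rintro (_ | _) ⟨y, hys, hy⟩
      exacts [rfl, (hys hy).elim]
  obtain ⟨U, hUo, hFU, hU⟩ := h Bool _ (by rintro (_ | _) <;> assumption) hd
  exact ⟨U true, U false, hUo _, hUo _, hFU true, hFU false,
    disjoint_iff_inter_eq_empty.2 (hU true false (by decide))⟩

theorem CollectionwiseNormal.exists_discreteFamily_open_between (h : CollectionwiseNormal X)
    {ι : Type} {F O : ι → Set X} (hFc : ∀ i, IsClosed (F i)) (hFd : DiscreteFamily X F)
    (hOo : ∀ i, IsOpen (O i)) (hFO : ∀ i, F i ⊆ O i) :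
    ∃ W : ι → Set X, (∀ i, IsOpen (W i)) ∧ (∀ i, F i ⊆ W i) ∧ (∀ i, W i ⊆ O i) ∧
      DiscreteFamily X W := by
  have := h.normalSpace
  obtain ⟨U, hUo, hFU, hU⟩ := h ι F hFc hFd
  obtain ⟨T, hTo, hFT, hTU⟩ := normal_exists_closure_subset
    (hFd.locallyFinite.isClosed_iUnion hFc) (isOpen_iUnion hUo) (iUnion_mono hFU)
  -- Near `x ∈ closure T ⊆ ⋃ i, U i`, the `U j` containing `x` meets `U i ∩ T` only for `i = j`.
  have hd : DiscreteFamily X fun i => U i ∩ T := by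
    intro x
    by_cases hx : x ∈ closure T
    · obtain ⟨j, hj⟩ := mem_iUnion.1 (hTU hx)
      have hmeet : ∀ i, (U j ∩ (U i ∩ T)).Nonempty → i = j := fun i ⟨y, hyj, hyi, _⟩ =>
        Classical.byContradiction fun hij => (hU i j hij).subset ⟨hyi, hyj⟩
      exact ⟨U j, hUo j, hj, fun i hi i' hi' => (hmeet i hi).trans (hmeet i' hi').symm⟩
    · refine ⟨(closure T)ᶜ, isClosed_closure.isOpen_compl, hx, ?_⟩
      rintro i ⟨y, hy, -, hyT⟩
      exact (hy (subset_closure hyT)).elim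
  refine ⟨fun i => U i ∩ T ∩ O i, fun i => ((hUo i).inter hTo).inter (hOo i),
    fun i x hx => ⟨⟨hFU i hx, hFT (mem_iUnion_of_mem i hx)⟩, hFO i hx⟩,
    fun i => inter_subset_right, hd.mono fun i => inter_subset_left⟩

theorem isClosed_setOf_forall_mem_subset {C : Set (Set X)} (hC : ∀ V ∈ C, IsOpen V)
    (U : Set X) : IsClosed {x | ∀ V ∈ C, x ∈ V → V ⊆ U} := by
  refine isClosed_of_closure_subset fun x hx V hV hxV => ?_
  obtain ⟨y, hyV, hy⟩ := mem_closure_iff.1 hx V (hC V hV) hxV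
  exact hy V hV hyV

theorem IsDevelopment.exists_isClosed_subset_of_monotone {G : ℕ → Set (Set X)}
    (hG : IsDevelopment X G) {A : ℕ → Set X} (hAo : ∀ n, IsOpen (A n)) (hA : Monotone A)
    (hAcov : ⋃ n, A n = univ) :
    ∃ E : ℕ → Set X, (∀ n, IsClosed (E n)) ∧ (∀ n, E n ⊆ A n) ∧ ⋃ n, E n = univ := by
  refine ⟨fun n => ⋃ m ∈ Iic n, {x | ∀ V ∈ G m, x ∈ V → V ⊆ A n}, fun n => ?_,
    fun n x hx => ?_, eq_univ_of_forall fun x => ?_⟩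
  · exact (finite_Iic n).isClosed_biUnion fun m _ => isClosed_setOf_forall_mem_subset (hG.1 m) _
  · obtain ⟨m, -, hx⟩ := mem_iUnion₂.1 hx
    obtain ⟨V, hV, hxV⟩ := hG.2.1 m x
    exact hx V hV hxV hxV
  · obtain ⟨k, hk⟩ := mem_iUnion.1 (hAcov ▸ mem_univ x)
    obtain ⟨j, hj⟩ := hG.2.2 x (A k) (hAo k) hk
    exact mem_iUnion.2 ⟨max j k, mem_iUnion₂.2 ⟨j, le_max_left j k,
      fun V hV hxV => (hj V hV hxV).trans (hA (le_max_right j k))⟩⟩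

theorem CollectionwiseNormal.exists_sigma_discrete_refinement (h : CollectionwiseNormal X)
    {G : ℕ → Set (Set X)} (hG : IsDevelopment X G) {α : Type} {s : α → Set X}
    (hso : ∀ a, IsOpen (s a)) (hs : ⋃ a, s a = univ) :
    ∃ W : ℕ → α → Set X, (∀ k a, IsOpen (W k a)) ∧ (∀ k, DiscreteFamily X (W k)) ∧
      (∀ k a, W k a ⊆ s a) ∧ ⋃ k, ⋃ a, W k a = univ := by
  obtain ⟨_, _⟩ := exists_wellFoundedLT α
  set F : ℕ → α → Set X := fun k a => {x | ∀ V ∈ G k, x ∈ V → V ⊆ s a} \ ⋃ b < a, s b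
  have hFc : ∀ k a, IsClosed (F k a) := fun k a =>
    (isClosed_setOf_forall_mem_subset (hG.1 k) _).sdiff (isOpen_biUnion fun b _ => hso b)
  have hFs : ∀ k a, F k a ⊆ s a := fun k a x hx => by
    obtain ⟨V, hV, hxV⟩ := hG.2.1 k x
    exact hx.1 V hV hxV hxV
  -- A member `V ∋ x` of `G k` meeting `F k a` lies in `s a`, so it misses `F k b` for `b > a`.
  have hFd : ∀ k, DiscreteFamily X (F k) := fun k x => by
    obtain ⟨V, hV, hxV⟩ := hG.2.1 k x
    refine ⟨V, hG.1 k V hV, hxV, fun a ⟨y, hyV, hya⟩ b ⟨z, hzV, hzb⟩ => ?_⟩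
    have hlt : ∀ {y z a b}, y ∈ V → y ∈ F k a → z ∈ V → z ∈ F k b → ¬ a < b :=
      fun hyV hya hzV hzb hab => hzb.2 (mem_biUnion hab (hya.1 V hV hyV hzV))
    exact le_antisymm (not_lt.1 (hlt hzV hzb hyV hya)) (not_lt.1 (hlt hyV hya hzV hzb))
  have hFcov : ⋃ k, ⋃ a, F k a = univ := eq_univ_of_forall fun x => by
    obtain ⟨a, hxa, hmin⟩ := wellFounded_lt.has_min {a | x ∈ s a}
      (mem_iUnion.1 (hs ▸ mem_univ x))
    obtain ⟨k, hk⟩ := hG.2.2 x (s a) (hso a) hxa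
    exact mem_iUnion₂.2 ⟨k, a, hk, fun hx => by
      obtain ⟨b, hba, hxb⟩ := mem_iUnion₂.1 hx
      exact hmin b hxb hba⟩
  choose W hWo hFW hWs hWd using fun k =>
    h.exists_discreteFamily_open_between (hFc k) (hFd k) hso (hFs k)
  exact ⟨W, hWo, hWd, hWs, eq_univ_of_forall fun x => by
    obtain ⟨k, a, hx⟩ := mem_iUnion₂.1 (hFcov ▸ mem_univ x)
    exact mem_iUnion₂.2 ⟨k, a, hFW k a hx⟩⟩

theorem IsDevelopment.exists_locallyFinite_refinement [NormalSpace X] {G : ℕ → Set (Set X)}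
    (hG : IsDevelopment X G) {α : Type} {W : ℕ → α → Set X} (hWo : ∀ k a, IsOpen (W k a))
    (hWlf : ∀ k, LocallyFinite (W k)) (hW : ⋃ k, ⋃ a, W k a = univ) :
    ∃ R : ℕ × α → Set X, (∀ p, IsOpen (R p)) ∧ (∀ p, R p ⊆ W p.1 p.2) ∧ LocallyFinite R ∧
      ⋃ p, R p = univ := by
  classical
  set A := accumulate fun k => ⋃ a, W k a
  have hAo : ∀ n, IsOpen (A n) := fun n =>
    isOpen_biUnion fun k _ => isOpen_iUnion (hWo k)
  obtain ⟨E, hEc, hEA, hE⟩ := hG.exists_isClosed_subset_of_monotone hAo monotone_accumulate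
    (by rw [iUnion_accumulate, hW])
  choose T hTo hET hTA using fun n => normal_exists_closure_subset (hEc n) (hAo n) (hEA n)
  refine ⟨fun p => W p.1 p.2 \ ⋃ m ∈ Iio p.1, closure (T m), fun p => ?_,
    fun p => sdiff_subset, fun x => ?_, eq_univ_of_forall fun x => ?_⟩
  · exact (hWo _ _).sdiff ((finite_Iio _).isClosed_biUnion fun _ _ => isClosed_closure)
  -- Near a point of `T n` only the levels `m ≤ n` survive, each locally finite.
  · obtain ⟨n, hxn⟩ := mem_iUnion.1 (hE ▸ mem_univ x)
    choose t ht hfin using fun m => hWlf m x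
    refine ⟨T n ∩ ⋂ m ∈ Iic n, t m,
      inter_mem ((hTo n).mem_nhds (hET n hxn)) ((biInter_mem (finite_Iic n)).2 fun m _ => ht m),
      ((finite_Iic n).biUnion fun m _ => (finite_singleton m).prod (hfin m)).subset ?_⟩
    rintro ⟨m, a⟩ ⟨y, ⟨hyW, hyT'⟩, hyT, hyt⟩
    have hmn : m ≤ n := not_lt.1 fun hnm => hyT' (mem_biUnion hnm (subset_closure hyT))
    exact mem_biUnion hmn ⟨rfl, y, hyW, mem_iInter₂.1 hyt m hmn⟩
  · have hex : ∃ n, x ∈ closure (T n) := by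
      obtain ⟨n, hxn⟩ := mem_iUnion.1 (hE ▸ mem_univ x)
      exact ⟨n, subset_closure (hET n hxn)⟩
    obtain ⟨m, hm, hxm⟩ := mem_accumulate.1 (hTA _ (Nat.find_spec hex))
    obtain ⟨a, hxa⟩ := mem_iUnion.1 hxm
    refine mem_iUnion.2 ⟨(m, a), hxa, fun hx => ?_⟩
    obtain ⟨l, hl, hxl⟩ := mem_iUnion₂.1 hx
    exact Nat.find_min hex (lt_of_lt_of_le hl hm) hxl

theorem CollectionwiseNormal.paracompactSpace (h : CollectionwiseNormal X)
    {G : ℕ → Set (Set X)} (hG : IsDevelopment X G) : ParacompactSpace X := by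
  have := h.normalSpace
  refine ⟨fun α s hso hs => ?_⟩
  obtain ⟨W, hWo, hWd, hWs, hW⟩ := h.exists_sigma_discrete_refinement hG hso hs
  obtain ⟨R, hRo, hRW, hRlf, hR⟩ :=
    hG.exists_locallyFinite_refinement hWo (fun k => (hWd k).locallyFinite) hW
  exact ⟨ℕ × α, R, hRo, hR, hRlf, fun p => ⟨p.2, (hRW p).trans (hWs _ _)⟩⟩

def IsOpenCovering (C : Set (Set X)) : Prop :=
  (∀ U ∈ C, IsOpen U) ∧ ∀ x, ∃ U ∈ C, x ∈ U

def IsBarycentricRefinement (D C : Set (Set X)) : Prop :=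
  ∀ x, ∃ U ∈ C, ∀ W ∈ D, x ∈ W → W ⊆ U

theorem IsOpenCovering.image2_inter {C D : Set (Set X)} (hC : IsOpenCovering C)
    (hD : IsOpenCovering D) : IsOpenCovering (image2 (· ∩ ·) C D) := by
  refine ⟨?_, fun x => ?_⟩
  · rintro _ ⟨U, hU, V, hV, rfl⟩
    exact (hC.1 U hU).inter (hD.1 V hV)
  · obtain ⟨U, hU, hxU⟩ := hC.2 x
    obtain ⟨V, hV, hxV⟩ := hD.2 x
    exact ⟨U ∩ V, mem_image2_of_mem hU hV, hxU, hxV⟩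

theorem IsDevelopment.isOpenCovering {G : ℕ → Set (Set X)} (hG : IsDevelopment X G) (n : ℕ) :
    IsOpenCovering (G n) :=
  ⟨hG.1 n, hG.2.1 n⟩

theorem IsOpenCovering.exists_isBarycentricRefinement [ParacompactSpace X] [NormalSpace X]
    {C : Set (Set X)} (hC : IsOpenCovering C) :
    ∃ D, IsOpenCovering D ∧ IsBarycentricRefinement D C := by
  obtain ⟨v, hvo, hv, hvlf, hvC⟩ := precise_refinement (fun U : C => (U : Set X))
    (fun U => hC.1 U U.2) (eq_univ_of_forall fun x => by simpa using hC.2 x)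
  obtain ⟨w, hw, -, hwv⟩ :=
    exists_iUnion_eq_closure_subset hvo (fun x => hvlf.point_finite x) hv
  set K := fun U => closure (w U)
  have hKlf : LocallyFinite K := hvlf.subset hwv
  -- `N x` avoids every `K U` missing `x`, so a point of `K U` can only lie in `N y` if `y ∈ K U`.
  set N := fun x => (⋂ U ∈ {U | x ∈ K U}, v U) ∩ ⋂ (U) (_ : x ∉ K U), (K U)ᶜ
  have hN : ∀ x, N x ∈ 𝓝 x := fun x =>
    inter_mem ((biInter_mem ((hvlf.point_finite x).subset fun U hU => hwv U hU)).2
        fun U hU => (hvo U).mem_nhds (hwv U hU))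
      (hKlf.iInter_compl_mem_nhds (fun _ => isClosed_closure) x)
  refine ⟨range fun x => interior (N x), ⟨?_, fun x => ?_⟩, fun x => ?_⟩
  · rintro _ ⟨x, rfl⟩
    exact isOpen_interior
  · exact ⟨_, mem_range_self x, mem_interior_iff_mem_nhds.2 (hN x)⟩
  · obtain ⟨U, hxU⟩ := mem_iUnion.1 (hw ▸ mem_univ x)
    refine ⟨U, U.2, ?_⟩
    rintro _ ⟨y, rfl⟩ hxy
    have hyU : y ∈ K U := by_contra fun hyU =>
      mem_iInter₂.1 (interior_subset hxy).2 U hyU (subset_closure hxU)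
    exact interior_subset.trans (inter_subset_left.trans
      ((biInter_subset_of_mem (show U ∈ {U | y ∈ K U} from hyU)).trans (hvC U)))

theorem IsDevelopment.exists_isBarycentricRefinement_succ [ParacompactSpace X] [NormalSpace X]
    {G : ℕ → Set (Set X)} (hG : IsDevelopment X G) :
    ∃ H : ℕ → Set (Set X), IsDevelopment X H ∧
      ∀ k, IsBarycentricRefinement (H (k + 1)) (H k) := by
  have hstep : ∀ C : Set (Set X), ∃ D, IsOpenCovering C →
      IsOpenCovering D ∧ IsBarycentricRefinement D C := fun C => by
    by_cases hC : IsOpenCovering C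
    · obtain ⟨D, hD⟩ := hC.exists_isBarycentricRefinement
      exact ⟨D, fun _ => hD⟩
    · exact ⟨∅, fun h => (hC h).elim⟩
  choose ref href using hstep
  -- Intersecting with `G k` before refining makes `H` a development.
  let H : ℕ → Set (Set X) := fun n => Nat.rec (G 0) (fun k Hk => ref (image2 (· ∩ ·) Hk (G k))) n
  have hH : ∀ k, IsOpenCovering (H k) := fun k => by
    induction k with
    | zero => exact hG.isOpenCovering 0
    | succ k ih => exact (href _ (ih.image2_inter (hG.isOpenCovering k))).1
  have hHG : ∀ k x, ∃ U ∈ H k, ∃ V ∈ G k, ∀ W ∈ H (k + 1), x ∈ W → W ⊆ U ∩ V := fun k x => by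
    obtain ⟨_, ⟨U, hU, V, hV, rfl⟩, hUV⟩ :=
      (href _ ((hH k).image2_inter (hG.isOpenCovering k))).2 x
    exact ⟨U, hU, V, hV, hUV⟩
  refine ⟨H, ⟨fun k => (hH k).1, fun k => (hH k).2, fun x O hO hxO => ?_⟩, fun k x => ?_⟩
  · obtain ⟨n, hn⟩ := hG.2.2 x O hO hxO
    obtain ⟨U, -, V, hV, hUV⟩ := hHG n x
    refine ⟨n + 1, fun W hW hxW => ?_⟩
    have hWV : W ⊆ V := (hUV W hW hxW).trans inter_subset_right
    exact hWV.trans (hn V hV (hWV hxW))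
  · obtain ⟨U, hU, V, -, hUV⟩ := hHG k x
    exact ⟨U, hU, fun W hW hxW => (hUV W hW hxW).trans inter_subset_left⟩

/-- The Alexandroff–Urysohn metrization theorem: the relations "`x` and `y` share a member of
`H k`" form a countable base of a uniformity inducing the topology. -/
theorem IsDevelopment.metrizableSpace [T0Space X] {H : ℕ → Set (Set X)} (hH : IsDevelopment X H)
    (hbar : ∀ k, IsBarycentricRefinement (H (k + 1)) (H k)) :
    TopologicalSpace.MetrizableSpace X := by
  set V : ℕ → SetRel X X := fun k => {p | ∃ U ∈ H k, p.1 ∈ U ∧ p.2 ∈ U}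
  have hrefl : ∀ k x, (x, x) ∈ V k := fun k x =>
    let ⟨U, hU, hxU⟩ := hH.2.1 k x
    ⟨U, hU, hxU, hxU⟩
  have hsymm : ∀ k, V k ⊆ Prod.swap ⁻¹' V k := fun _ _ ⟨U, hU, h₁, h₂⟩ => ⟨U, hU, h₂, h₁⟩
  have hcomp : ∀ k, V (k + 1) ○ V (k + 1) ⊆ V k := by
    rintro k ⟨a, b⟩ ⟨z, ⟨U₁, hU₁, haU₁, hzU₁⟩, U₂, hU₂, hzU₂, hbU₂⟩
    obtain ⟨U, hU, hzU⟩ := hbar k z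
    exact ⟨U, hU, hzU U₁ hU₁ hzU₁ haU₁, hzU U₂ hU₂ hzU₂ hbU₂⟩
  have hanti : Antitone V := antitone_nat_of_succ_le fun k ⟨a, b⟩ hab =>
    hcomp k ⟨b, hab, hrefl _ b⟩
  have hb := (HasAntitoneBasis.iInf_principal hanti).toHasBasis
  let _ : UniformSpace X :=
    { uniformity := ⨅ k, 𝓟 (V k)
      symm := (hb.tendsto_iff hb).2 fun k _ => ⟨k, trivial, hsymm k⟩
      comp := ((hb.lift' (monotone_id.relComp monotone_id)).le_basis_iff hb).2
        fun k _ => ⟨k + 1, trivial, hcomp k⟩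
      nhds_eq_comap_uniformity := fun x => (nhds_basis_opens x).ext (hb.comap (Prod.mk x))
        (fun O ⟨hxO, hO⟩ => let ⟨k, hk⟩ := hH.2.2 x O hO hxO
          ⟨k, trivial, fun _ ⟨U, hU, hxU, hyU⟩ => hk U hU hxU hyU⟩)
        (fun k _ => let ⟨U, hU, hxU⟩ := hH.2.1 k x
          ⟨U, ⟨hxU, hH.1 k U hU⟩, fun _ hy => ⟨U, hU, hxU, hy⟩⟩) }
  have : (𝓤 X).IsCountablyGenerated := hb.isCountablyGenerated
  exact UniformSpace.metrizableSpace

end Bing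

/-- Bing's metrization theorem: a topological space is metrizable if and only if it is
a collectionwise normal Moore space. -/
theorem metrizable_iff_collectionwise_normal_moore (X : Type) [TopologicalSpace X] :
    TopologicalSpace.MetrizableSpace X ↔ (MooreSpace X ∧ CollectionwiseNormal X) := by
  constructor
  · intro _
    let := TopologicalSpace.metrizableSpaceMetric X
    exact ⟨⟨inferInstance, inferInstance, _, isDevelopment_ball⟩,
      collectionwiseNormal_of_pseudoEMetricSpace⟩
  · rintro ⟨⟨_, -, G, hG⟩, h⟩
    have := h.normalSpace
    have := h.paracompactSpace hG
    obtain ⟨H, hH, hbar⟩ := hG.exists_isBarycentricRefinement_succ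
    exact hH.metrizableSpace hbar
end

section
/- If κ is a regular uncountable cardinal and I is a κ-complete, κ⁺-saturated ideal on κ containing all singletons, then I is precipitous. -/
open Cardinal

variable {α : Type}

/-- `I` is a proper ideal on (the full powerset of) `α` containing all singletons. -/
def IsIdealOn (I : Set (Set α)) : Prop :=
  (∅ : Set α) ∈ I ∧ (Set.univ : Set α) ∉ I ∧
  (∀ S ∈ I, ∀ T ⊆ S, T ∈ I) ∧ (∀ S ∈ I, ∀ T ∈ I, S ∪ T ∈ I) ∧
  ∀ a : α, ({a} : Set α) ∈ I

/-- `I` is `κ`-complete where `κ = #α`: closed under unions of fewer than `κ` members. -/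
def IsKappaComplete (I : Set (Set α)) : Prop :=
  ∀ s : Set (Set α), #s < #α → s ⊆ I → ⋃₀ s ∈ I

/-- `I` is `κ⁺`-saturated: there is no family of `κ⁺` many `I`-positive sets that are
pairwise almost disjoint modulo `I`. -/
def IsSaturated (I : Set (Set α)) : Prop :=
  ¬ ∃ F : Set (Set α), #F = Order.succ #α ∧ (∀ S ∈ F, S ∉ I) ∧
      ∀ S ∈ F, ∀ T ∈ F, S ≠ T → S ∩ T ∈ I

/-- The histories of the Jech–Prikry game against a strategy `σ` for the player trying
to make the intersection empty, with opponent moves `b`. -/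
def gameHistory (σ : List (Set α) → Set α) (b : ℕ → Set α) : ℕ → List (Set α)
  | 0 => []
  | n + 1 => b n :: σ (gameHistory σ b n) :: gameHistory σ b n

/-- The "empty" player has a winning strategy in the precipitousness game for `I`:
players alternately choose `I`-positive sets, each included in the previous one, and
the empty player wins if the intersection of the play is empty. -/
def EmptyPlayerWins (I : Set (Set α)) : Prop :=
  ∃ σ : List (Set α) → Set α,
    (∀ b : ℕ → Set α, ∀ n : ℕ,
      (∀ m < n, b m ∉ I ∧ b m ⊆ σ (gameHistory σ b m)) →
        σ (gameHistory σ b n) ∉ I ∧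
          ∀ T : Set α, (gameHistory σ b n).head? = some T → σ (gameHistory σ b n) ⊆ T) ∧
    ∀ b : ℕ → Set α, (∀ n, b n ∉ I ∧ b n ⊆ σ (gameHistory σ b n)) → (⋂ n, b n) = ∅

/-- `I` is precipitous: the empty player has no winning strategy in the game of
`I`-positive sets (equivalently, the generic ultrapower is well-founded). -/
def Precipitous (I : Set (Set α)) : Prop :=
  ¬ EmptyPlayerWins I

/-! Let `σ` be a strategy for the empty player. Build a tree of positions whose level `n + 1` is a
maximal antichain modulo `I` of `σ`'s answers to one-move extensions of positions of level `n`.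
By saturation each level has at most `κ` nodes, so enumerating it in order type `κ` and removing
from each answer the earlier ones costs, by `κ`-completeness, only a null set; doing this inside
the parent's cell yields, on every level, pairwise disjoint cells nested in their parents' cells
and covering `σ`'s first move modulo `I`. As `κ > ω`, some point `x` lies in a cell on every
level. Disjointness forces these cells onto one branch of the tree, which is a play following
`σ` all of whose moves contain `x`, so `σ` is not winning. -/

open Set

section Ideal

variable {I : Set (Set α)}

theorem IsIdealOn.mem_of_subset (hI : IsIdealOn I) {S T : Set α} (hS : S ∈ I) (hTS : T ⊆ S) :
    T ∈ I :=
  hI.2.2.1 S hS T hTS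

theorem IsIdealOn.union_mem (hI : IsIdealOn I) {S T : Set α} (hS : S ∈ I) (hT : T ∈ I) :
    S ∪ T ∈ I :=
  hI.2.2.2.1 S hS T hT

theorem IsKappaComplete.biUnion_mem {β : Type} (hκ : IsKappaComplete I) {s : Set β}
    (hs : #s < #α) {f : β → Set α} (hf : ∀ i ∈ s, f i ∈ I) : ⋃ i ∈ s, f i ∈ I := by
  rw [← sUnion_image]
  exact hκ _ (mk_image_le.trans_lt hs) (image_subset_iff.2 hf)

theorem IsKappaComplete.iUnion_mem (hκ : IsKappaComplete I) (hα : ℵ₀ < #α) {f : ℕ → Set α}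
    (hf : ∀ n, f n ∈ I) : ⋃ n, f n ∈ I := by
  simpa using hκ.biUnion_mem (s := univ) (by simpa using hα) fun n _ => hf n

variable (I) in
def IsMaximalAntichain {β : Type} (f : β → Set α) (P W : Set β) : Prop :=
  W ⊆ P ∧ W.Pairwise (fun c d => f c ∩ f d ∈ I) ∧ ∀ c ∈ P, f c ∉ I → ∃ d ∈ W, f c ∩ f d ∉ I

variable (I) in
theorem exists_isMaximalAntichain {β : Type} (f : β → Set α) (P : Set β) :
    ∃ W, IsMaximalAntichain I f P W := by
  obtain ⟨W, ⟨hWP, hW⟩, hmax⟩ :=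
    zorn_subset {W | W ⊆ P ∧ W.Pairwise (fun c d => f c ∩ f d ∈ I)} fun C hC hchain =>
      ⟨⋃₀ C, ⟨sUnion_subset fun W hW => (hC hW).1,
        (pairwise_sUnion hchain.directedOn).2 fun W hW => (hC hW).2⟩,
        fun _ => subset_sUnion_of_mem⟩
  refine ⟨W, hWP, hW, fun c hcP hc => ?_⟩
  by_contra! hcW
  have hinsert : insert c W ⊆ W :=
    hmax ⟨insert_subset hcP hWP, hW.insert fun d hd _ => ⟨hcW d hd, inter_comm (f c) _ ▸ hcW d hd⟩⟩
      (subset_insert c W)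
  exact hc (by simpa using hcW c (hinsert (mem_insert c W)))

theorem IsSaturated.card_le {β : Type} (hsat : IsSaturated I) {f : β → Set α} {W : Set β}
    (hpos : ∀ c ∈ W, f c ∉ I) (hW : W.Pairwise fun c d => f c ∩ f d ∈ I) : #W ≤ #α := by
  by_contra! h
  obtain ⟨V, hVW, hV⟩ := le_mk_iff_exists_subset.1 (Order.succ_le_of_lt h)
  have hinj : InjOn f V := fun c hc d hd hcd => by
    by_contra hne
    exact hpos c (hVW hc) (by simpa [hcd] using hW (hVW hc) (hVW hd) hne)
  refine hsat ⟨f '' V, by rw [mk_image_eq_of_injOn f V hinj, hV], ?_, ?_⟩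
  · rintro _ ⟨c, hc, rfl⟩
    exact hpos c (hVW hc)
  · rintro _ ⟨c, hc, rfl⟩ _ ⟨d, hd, rfl⟩ hne
    exact hW (hVW hc) (hVW hd) (ne_of_apply_ne f hne)

end Ideal

section Disjointify

variable {β γ : Type}

def disjointedBy [LT γ] (W : Set β) (rank : β → γ) (A : β → Set α) (i : β) : Set α :=
  A i \ ⋃ j ∈ {j ∈ W | rank j < rank i}, A j

theorem disjointedBy_subset [LT γ] (W : Set β) (rank : β → γ) (A : β → Set α) (i : β) :
    disjointedBy W rank A i ⊆ A i :=
  sdiff_subset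

theorem pairwiseDisjoint_disjointedBy [LinearOrder γ] {W : Set β} {rank : β → γ}
    (hrank : InjOn rank W) (A : β → Set α) : W.PairwiseDisjoint (disjointedBy W rank A) := by
  have key : ∀ i ∈ W, ∀ j, rank i < rank j →
      Disjoint (disjointedBy W rank A i) (disjointedBy W rank A j) := fun i hi j hij =>
    disjoint_left.2 fun _ hxi hxj => hxj.2 (mem_biUnion ⟨hi, hij⟩ hxi.1)
  intro i hi j hj hne
  rcases lt_or_gt_of_ne (hrank.ne hi hj hne) with h | h
  · exact key i hi j h
  · exact (key j hj i h).symm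

theorem diff_disjointedBy_mem {I : Set (Set α)} (hκ : IsKappaComplete I) {W : Set β}
    {rank : β → (#α).ord.ToType} (hrank : InjOn rank W) {A : β → Set α}
    (hA : W.Pairwise fun i j => A i ∩ A j ∈ I) {i : β} (hi : i ∈ W) :
    A i \ disjointedBy W rank A i ∈ I := by
  have hsmall : #{j ∈ W | rank j < rank i} < #α :=
    calc #{j ∈ W | rank j < rank i}
        = #(rank '' {j ∈ W | rank j < rank i}) :=
          (mk_image_eq_of_injOn _ _ (hrank.mono (sep_subset _ _))).symm
      _ ≤ #(Iio (rank i)) := mk_le_mk_of_subset (image_subset_iff.2 fun _ hj => hj.2)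
      _ < #α := by simpa using mk_Iio_lt (rank i) (by simp)
  rw [disjointedBy, sdiff_sdiff_right_self, inter_iUnion₂]
  exact hκ.biUnion_mem hsmall fun j hj => hA hi hj.1 (ne_of_apply_ne rank hj.2.ne')

theorem exists_injOn_ord_toType [Nonempty α] {W : Set β} (hW : #W ≤ #α) :
    ∃ rank : β → (#α).ord.ToType, InjOn rank W := by
  obtain ⟨e⟩ : Nonempty (W ↪ (#α).ord.ToType) := by
    rw [← le_def, mk_ord_toType]
    exact hW
  have : Nonempty (#α).ord.ToType := by
    rw [← mk_ne_zero_iff, mk_ord_toType]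
    exact mk_ne_zero α
  refine ⟨Function.extend Subtype.val e fun _ => Classical.arbitrary _, fun i hi j hj hij => ?_⟩
  rw [Subtype.val_injective.extend_apply e _ ⟨i, hi⟩,
    Subtype.val_injective.extend_apply e _ ⟨j, hj⟩] at hij
  exact congrArg Subtype.val (e.injective hij)

end Disjointify

section Game

variable (I : Set (Set α)) (σ : List (Set α) → Set α)

/-- The move of `σ` after the opponent's moves `b 0, …, b (n - 1)`. -/
def response (b : ℕ → Set α) (n : ℕ) : Set α :=
  σ (gameHistory σ b n)

def IsLegal (b : ℕ → Set α) (n : ℕ) : Prop :=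
  ∀ m < n, b m ∉ I ∧ b m ⊆ response σ b m

def IsStrategy : Prop :=
  ∀ b n, IsLegal I σ b n → response σ b n ∉ I ∧
    ∀ T, (gameHistory σ b n).head? = some T → response σ b n ⊆ T

variable {I σ} {b b' : ℕ → Set α} {n : ℕ}

theorem gameHistory_congr (h : ∀ m < n, b m = b' m) :
    gameHistory σ b n = gameHistory σ b' n := by
  induction n with
  | zero => rfl
  | succ n ih =>
    rw [gameHistory, gameHistory, ih fun m hm => h m (hm.trans n.lt_succ_self),
      h n n.lt_succ_self]

theorem response_congr (h : ∀ m < n, b m = b' m) : response σ b n = response σ b' n :=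
  congrArg σ (gameHistory_congr h)

theorem IsStrategy.response_not_mem (hσ : IsStrategy I σ) (hb : IsLegal I σ b n) :
    response σ b n ∉ I :=
  (hσ b n hb).1

theorem IsStrategy.response_succ_subset (hσ : IsStrategy I σ) (hb : IsLegal I σ b (n + 1)) :
    response σ b (n + 1) ⊆ b n :=
  (hσ b (n + 1) hb).2 (b n) rfl

theorem IsLegal.update (hb : IsLegal I σ b n) {B : Set α} (hB : B ∉ I)
    (hBb : B ⊆ response σ b n) : IsLegal I σ (Function.update b n B) (n + 1) := by
  have hagree : ∀ m < n, Function.update b n B m = b m := fun m hm =>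
    Function.update_of_ne hm.ne _ _
  intro m hm
  rw [response_congr fun k hk => hagree k (hk.trans_le (Nat.lt_succ_iff.1 hm))]
  rcases (Nat.lt_succ_iff.1 hm).lt_or_eq with hm | rfl
  · rw [hagree m hm]
    exact hb m hm
  · rw [Function.update_self]
    exact ⟨hB, hBb⟩

end Game

section Tree

variable (I : Set (Set α)) (σ : List (Set α) → Set α)

def children (n : ℕ) (T : Set (ℕ → Set α)) : Set (ℕ → Set α) :=
  {c | ∃ d ∈ T, ∃ B ∉ I, B ⊆ response σ d n ∧ c = Function.update d n B}

/-- Positions of length `n` are padded with `∅`, so that a node `d` of level `n + 1` determines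
its parent `Function.update d n ∅`. -/
noncomputable def tree : ℕ → Set (ℕ → Set α)
  | 0 => {fun _ => ∅}
  | n + 1 => (exists_isMaximalAntichain I (response σ · (n + 1)) (children I σ n (tree n))).choose

variable {I σ} {d : ℕ → Set α} {n : ℕ}

theorem tree_succ_isMaximalAntichain (n : ℕ) :
    IsMaximalAntichain I (response σ · (n + 1)) (children I σ n (tree I σ n))
      (tree I σ (n + 1)) :=
  (exists_isMaximalAntichain I _ _).choose_spec

theorem isLegal_and_eq_empty_of_mem_tree (hd : d ∈ tree I σ n) :
    IsLegal I σ d n ∧ ∀ m ≥ n, d m = ∅ := by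
  induction n generalizing d with
  | zero =>
    rw [hd]
    exact ⟨fun m hm => absurd hm m.not_lt_zero, fun _ _ => rfl⟩
  | succ n ih =>
    obtain ⟨c, hc, B, hB, hBc, rfl⟩ := (tree_succ_isMaximalAntichain n).1 hd
    refine ⟨(ih hc).1.update hB hBc, fun m hm => ?_⟩
    rw [Function.update_of_ne (by omega)]
    exact (ih hc).2 m (by omega)

theorem isLegal_of_mem_tree (hd : d ∈ tree I σ n) : IsLegal I σ d n :=
  (isLegal_and_eq_empty_of_mem_tree hd).1

theorem update_mem_tree (hd : d ∈ tree I σ (n + 1)) : Function.update d n ∅ ∈ tree I σ n := by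
  obtain ⟨c, hc, B, -, -, rfl⟩ := (tree_succ_isMaximalAntichain n).1 hd
  rw [Function.update_idem, ← (isLegal_and_eq_empty_of_mem_tree hc).2 n le_rfl,
    Function.update_eq_self]
  exact hc

theorem IsStrategy.response_succ_subset_update (hσ : IsStrategy I σ)
    (hd : d ∈ tree I σ (n + 1)) :
    response σ d (n + 1) ⊆ response σ (Function.update d n ∅) n := by
  have hlegal := isLegal_of_mem_tree hd
  have hparent : response σ (Function.update d n ∅) n = response σ d n :=
    response_congr fun m hm => Function.update_of_ne hm.ne _ _
  rw [hparent]
  exact (hσ.response_succ_subset hlegal).trans (hlegal n n.lt_succ_self).2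

theorem pairwise_tree (n : ℕ) :
    (tree I σ n).Pairwise fun c d => response σ c n ∩ response σ d n ∈ I := by
  cases n with
  | zero => exact pairwise_singleton _ _
  | succ n => exact (tree_succ_isMaximalAntichain n).2.1

theorem IsStrategy.card_tree_le (hsat : IsSaturated I) (hσ : IsStrategy I σ) (n : ℕ) :
    #(tree I σ n) ≤ #α :=
  hsat.card_le (fun _ hd => hσ.response_not_mem (isLegal_of_mem_tree hd)) (pairwise_tree n)

theorem IsStrategy.exists_mem_tree_inter_response_not_mem (hI : IsIdealOn I)
    (hσ : IsStrategy I σ) {Z : Set α} (hZ : Z ∉ I) (hZσ : Z ⊆ σ []) (n : ℕ) :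
    ∃ d ∈ tree I σ n, Z ∩ response σ d n ∉ I := by
  induction n with
  | zero => exact ⟨_, rfl, by rwa [show response σ (fun _ => ∅) 0 = σ [] from rfl,
      inter_eq_left.2 hZσ]⟩
  | succ n ih =>
    obtain ⟨d, hd, hZd⟩ := ih
    set c := Function.update d n (Z ∩ response σ d n)
    have hc : c ∈ children I σ n (tree I σ n) := ⟨d, hd, _, hZd, inter_subset_right, rfl⟩
    have hlegal : IsLegal I σ c (n + 1) :=
      (isLegal_of_mem_tree hd).update hZd inter_subset_right
    have hcZ : response σ c (n + 1) ⊆ Z := by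
      have hcn : c n = Z ∩ response σ d n := Function.update_self ..
      exact (hσ.response_succ_subset hlegal).trans (hcn ▸ inter_subset_left)
    obtain ⟨e, he, hce⟩ :=
      (tree_succ_isMaximalAntichain n).2.2 c hc (hσ.response_not_mem hlegal)
    exact ⟨e, he, fun h => hce (hI.mem_of_subset h (inter_subset_inter_left _ hcZ))⟩

end Tree

theorem eq_diag_of_forall_lt {γ : Type} {f : ℕ → ℕ → γ}
    (h : ∀ n, ∀ m < n, f (n + 1) m = f n m) : ∀ n, ∀ m < n, f n m = f (m + 1) m := by
  intro n
  induction n with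
  | zero => exact fun m hm => absurd hm m.not_lt_zero
  | succ n ih =>
    intro m hm
    rcases (Nat.lt_succ_iff.1 hm).lt_or_eq with hm | rfl
    · rw [h n m hm, ih m hm]
    · rfl

section Cell

variable (I : Set (Set α)) (σ : List (Set α) → Set α)

noncomputable def cell (rank : ℕ → (ℕ → Set α) → (#α).ord.ToType) :
    ℕ → (ℕ → Set α) → Set α
  | 0, d => response σ d 0
  | n + 1, d => disjointedBy (tree I σ (n + 1)) (rank (n + 1))
      (fun d => response σ d (n + 1) ∩ cell rank n (Function.update d n ∅)) d

variable {I σ} {rank : ℕ → (ℕ → Set α) → (#α).ord.ToType}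

theorem cell_subset_response (n : ℕ) (d : ℕ → Set α) : cell I σ rank n d ⊆ response σ d n := by
  cases n with
  | zero => exact subset_rfl
  | succ n => exact (disjointedBy_subset _ _ _ d).trans inter_subset_left

theorem cell_succ_subset (n : ℕ) (d : ℕ → Set α) :
    cell I σ rank (n + 1) d ⊆ cell I σ rank n (Function.update d n ∅) :=
  (disjointedBy_subset _ _ _ d).trans inter_subset_right

variable (hrank : ∀ n, InjOn (rank n) (tree I σ n))
include hrank

theorem pairwiseDisjoint_cell (n : ℕ) : (tree I σ n).PairwiseDisjoint (cell I σ rank n) := by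
  cases n with
  | zero => exact pairwiseDisjoint_singleton _ _
  | succ n => exact pairwiseDisjoint_disjointedBy (hrank (n + 1)) _

theorem IsStrategy.response_diff_cell_mem (hI : IsIdealOn I) (hκ : IsKappaComplete I)
    (hσ : IsStrategy I σ) (n : ℕ) :
    ∀ d ∈ tree I σ n, response σ d n \ cell I σ rank n d ∈ I := by
  induction n with
  | zero => exact fun d _ => by simpa [cell] using hI.1
  | succ n ih =>
    intro d hd
    set parent := Function.update d n ∅
    have hA : (tree I σ (n + 1)).Pairwise fun c e =>
        (response σ c (n + 1) ∩ cell I σ rank n (Function.update c n ∅)) ∩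
          (response σ e (n + 1) ∩ cell I σ rank n (Function.update e n ∅)) ∈ I :=
      (pairwise_tree (n + 1)).imp fun c e h =>
        hI.mem_of_subset h (inter_subset_inter inter_subset_left inter_subset_left)
    refine hI.mem_of_subset (hI.union_mem (diff_disjointedBy_mem hκ (hrank _) hA hd)
      (ih parent (update_mem_tree hd))) fun x ⟨hxd, hxc⟩ => ?_
    by_cases hxp : x ∈ cell I σ rank n parent
    · exact Or.inl ⟨⟨hxd, hxp⟩, hxc⟩
    · exact Or.inr ⟨hσ.response_succ_subset_update hd hxd, hxp⟩

theorem IsStrategy.first_move_diff_iUnion_cell_mem (hI : IsIdealOn I) (hκ : IsKappaComplete I)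
    (hσ : IsStrategy I σ) (n : ℕ) : σ [] \ ⋃ d ∈ tree I σ n, cell I σ rank n d ∈ I := by
  by_contra hZ
  obtain ⟨d, hd, hZd⟩ := hσ.exists_mem_tree_inter_response_not_mem hI hZ sdiff_subset n
  refine hZd (hI.mem_of_subset (hσ.response_diff_cell_mem hrank hI hκ n d hd) ?_)
  rintro x ⟨⟨-, hx⟩, hxd⟩
  exact ⟨hxd, fun hc => hx (mem_biUnion hd hc)⟩

/-- Disjointness of the cells puts those containing `x` on a single branch of the tree. -/
theorem IsStrategy.exists_play_of_mem_cells (hσ : IsStrategy I σ) {x : α}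
    (hx : ∀ n, x ∈ ⋃ d ∈ tree I σ n, cell I σ rank n d) :
    ∃ b : ℕ → Set α, (∀ n, b n ∉ I ∧ b n ⊆ response σ b n) ∧ x ∈ ⋂ n, b n := by
  simp only [mem_iUnion₂] at hx
  choose d hd hxd using hx
  have hparent (n : ℕ) : Function.update (d (n + 1)) n ∅ = d n :=
    (pairwiseDisjoint_cell hrank n).elim (update_mem_tree (hd (n + 1))) (hd n)
      (not_disjoint_iff.2 ⟨x, cell_succ_subset n _ (hxd (n + 1)), hxd n⟩)
  have hdiag := eq_diag_of_forall_lt (f := d) fun n m (hm : m < n) => by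
    rw [← hparent n, Function.update_of_ne hm.ne]
  have hresponse (n : ℕ) : response σ (fun m => d (m + 1) m) n = response σ (d (n + 1)) n :=
    response_congr fun m hm => (hdiag (n + 1) m (by omega)).symm
  refine ⟨fun m => d (m + 1) m, fun n => ?_, mem_iInter.2 fun n => ?_⟩
  · rw [hresponse n]
    exact isLegal_of_mem_tree (hd (n + 1)) n n.lt_succ_self
  · exact hσ.response_succ_subset (isLegal_of_mem_tree (hd (n + 1)))
      (cell_subset_response (n + 1) _ (hxd (n + 1)))

end Cell

theorem precipitous_of_saturated_general (hunc : aleph 0 < #α)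
    (I : Set (Set α)) (hI : IsIdealOn I) (hcompl : IsKappaComplete I)
    (hsat : IsSaturated I) : Precipitous I := by
  rintro ⟨σ, hσ : IsStrategy I σ, hwin⟩
  have hω : ℵ₀ < #α := by simpa using hunc
  have : Nonempty α := mk_ne_zero_iff.1 (aleph0_pos.trans hω).ne'
  choose rank hrank using fun n => exists_injOn_ord_toType (hσ.card_tree_le hsat n)
  set N := ⋃ n, (σ [] \ ⋃ d ∈ tree I σ n, cell I σ rank n d)
  have hN : N ∈ I := hcompl.iUnion_mem hω (hσ.first_move_diff_iUnion_cell_mem hrank hI hcompl)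
  have hfirst : σ [] ∉ I := hσ.response_not_mem (b := fun _ => ∅) (n := 0) nofun
  obtain ⟨x, hx0, hxN⟩ : (σ [] \ N).Nonempty := by
    rw [nonempty_iff_ne_empty, Ne, sdiff_eq_empty]
    exact fun h => hfirst (hI.mem_of_subset hN h)
  obtain ⟨b, hb, hxb⟩ := hσ.exists_play_of_mem_cells hrank fun n =>
    by_contra fun h => hxN (mem_iUnion.2 ⟨n, hx0, h⟩)
  rw [hwin b hb] at hxb
  exact hxb

/-- If `κ` is a regular uncountable cardinal and `I` is a `κ`-complete, `κ⁺`-saturated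
ideal on `κ` containing all singletons, then `I` is precipitous. -/
theorem precipitous_of_saturated (hreg : (#α).IsRegular) (hunc : aleph 0 < #α)
    (I : Set (Set α)) (hI : IsIdealOn I) (hcompl : IsKappaComplete I)
    (hsat : IsSaturated I) : Precipitous I :=
  precipitous_of_saturated_general hunc I hI hcompl hsat
end

section
/- If κ is weakly compact, then there is no nonreflecting stationary subset of κ: every stationary S ⊆ κ reflects, i.e., there is a regular α < κ such that S ∩ α is stationary in α. -/
open Cardinal

/-- `C` is club (closed unbounded) below the ordinal `o`. -/
def IsClubBelow (C : Set Ordinal) (o : Ordinal) : Prop :=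
  C ⊆ Set.Iio o ∧ (∀ a < o, ∃ b ∈ C, a < b) ∧
  ∀ a, a < o → a ≠ 0 → (∀ b < a, ∃ c ∈ C, b < c ∧ c < a) → a ∈ C

/-- `S` is stationary below the ordinal `o`. -/
def IsStationaryBelow (S : Set Ordinal) (o : Ordinal) : Prop :=
  ∀ C, IsClubBelow C o → (S ∩ C).Nonempty

/-- `(T, lt, ht)` is a tree of height `κ` with levels of size `< κ`: `lt` is a strict
order whose predecessor sets are chains meeting each lower level exactly once, `ht`
is the height function, all levels below `κ` are realized and have size `< κ`. -/
def IsKappaTree (κ : Cardinal.{0}) (T : Type) (lt : T → T → Prop)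
    (ht : T → Ordinal) : Prop :=
  (∀ t, ¬ lt t t) ∧ (∀ a b c, lt a b → lt b c → lt a c) ∧
  (∀ s t, lt s t → ht s < ht t) ∧
  (∀ t, ∀ o < ht t, ∃! s, lt s t ∧ ht s = o) ∧
  (∀ t, ht t < κ.ord) ∧ (∀ o < κ.ord, ∃ t, ht t = o) ∧
  (∀ o : Ordinal, #{t : T // ht t = o} < κ)

/-- A cofinal branch: a chain meeting every level. -/
def HasCofinalBranch (κ : Cardinal.{0}) (T : Type) (lt : T → T → Prop)
    (ht : T → Ordinal) : Prop :=
  ∃ B : Set T, (∀ s ∈ B, ∀ t ∈ B, s = t ∨ lt s t ∨ lt t s) ∧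
    ∀ o < κ.ord, ∃ t ∈ B, ht t = o

/-- The tree property at `κ`: every tree of height `κ` with levels of size `< κ` has a
cofinal branch. -/
def TreeProperty (κ : Cardinal.{0}) : Prop :=
  ∀ (T : Type) (lt : T → T → Prop) (ht : T → Ordinal),
    IsKappaTree κ T lt ht → HasCofinalBranch κ T lt ht

/-- `κ` is inaccessible: regular, uncountable, strong limit. -/
def Inaccessible (κ : Cardinal.{0}) : Prop :=
  κ.IsRegular ∧ aleph 0 < κ ∧ ∀ μ < κ, (2 : Cardinal) ^ μ < κ

/-- `κ` is weakly compact: inaccessible with the tree property. -/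
def WeaklyCompact (κ : Cardinal.{0}) : Prop :=
  Inaccessible κ ∧ TreeProperty κ

/-!
Suppose `S` reflects at no regular `α < κ`, and fix for each such `α` a club `E α ⊆ α` disjoint
from `S`. The tree property turns the filter of co-bounded subsets of `κ` into a `κ`-complete
ultrafilter `U` on any algebra of `κ` many subsets of `κ`: a cofinal branch through the tree of
patterns on the first `o` sets that are realized unboundedly often decides all of them. Take the
sets defined by comparisons of the `κ` many maps generated from the identity and constants by
`cof`, fundamental sequences and "next element of `E`". A `<_U`-least such map `f` above every constant represents `κ`
in the ultrapower: every map below it is `U`-constant. As `κ` is regular, so is `f β` for `U`-almost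
all `β`, hence the `δ` with `δ ∈ E (f β)` almost everywhere are unbounded in `κ`. A limit point
`σ ∈ S` of them then lies in the closed set `E (f β)` for almost all `β`, which is absurd.
-/

open Ordinal Set

def IsUnboundedBelow (X : Set Ordinal) (o : Ordinal) : Prop :=
  ∀ ξ < o, ∃ α ∈ X, ξ < α ∧ α < o

theorem IsUnboundedBelow.mono {X Y : Set Ordinal} {o : Ordinal} (hXY : X ⊆ Y)
    (hX : IsUnboundedBelow X o) : IsUnboundedBelow Y o :=
  fun ξ hξ => (hX ξ hξ).imp fun _ ⟨hα, h⟩ => ⟨hXY hα, h⟩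

def accBelow (D : Set Ordinal) (o : Ordinal) : Set Ordinal :=
  {σ | σ < o ∧ σ ≠ 0 ∧ ∀ b < σ, ∃ δ ∈ D, b < δ ∧ δ < σ}

theorem isClubBelow_accBelow {D : Set Ordinal} {o : Ordinal} (ho : ℵ₀ < o.cof)
    (hD : IsUnboundedBelow D o) : IsClubBelow (accBelow D o) o := by
  refine ⟨fun σ h => h.1, fun a ha => ?_, fun σ hσo hσ0 hσ => ⟨hσo, hσ0, fun b hb => ?_⟩⟩
  · choose! n hnD hn hno using hD
    have hiter (k : ℕ) : n^[k] a < o := by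
      induction k with
      | zero => exact ha
      | succ k ih => rw [Function.iterate_succ_apply']; exact hno _ ih
    have hstep (k : ℕ) : n^[k] a < n^[k + 1] a := by
      rw [Function.iterate_succ_apply']; exact hn _ (hiter k)
    have hlt (k : ℕ) : n^[k] a < Ordinal.nfp n a :=
      (hstep k).trans_le (Ordinal.iterate_le_nfp n a (k + 1))
    refine ⟨Ordinal.nfp n a, ⟨Ordinal.nfp_lt_ord ho hno ha, (hlt 0).ne_bot, fun b hb => ?_⟩, hlt 0⟩
    obtain ⟨k, hk⟩ := Ordinal.lt_nfp_iff.1 hb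
    refine ⟨n^[k + 1] a, ?_, hk.trans (hstep k), hlt (k + 1)⟩
    rw [Function.iterate_succ_apply']
    exact hnD _ (hiter k)
  · obtain ⟨c, hc, hbc, hcσ⟩ := hσ b hb
    obtain ⟨δ, hδ, hbδ, hδc⟩ := hc.2.2 b hbc
    exact ⟨δ, hδ, hbδ, hδc.trans hcσ⟩

theorem exists_lt_ord_forall_lt {κ : Cardinal.{0}} (hreg : κ.IsRegular) {s : Set Ordinal}
    (hs : #s < lift.{1} κ) (hsκ : s ⊆ Iio κ.ord) : ∃ η < κ.ord, ∀ x ∈ s, x < η := by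
  have hsup : sSup s < κ.ord :=
    Ordinal.sSup_lt_of_lt_cof (by rwa [← Ordinal.lift_cof, hreg.cof_ord]) hsκ
  exact ⟨Order.succ (sSup s), (isSuccLimit_ord hreg.aleph0_le).succ_lt hsup,
    fun x hx => Order.lt_succ_iff.2 (le_csSup ⟨κ.ord, fun y hy => (hsκ hy).le⟩ hx)⟩

theorem mk_image_Iio_lt {κ : Cardinal.{0}} {α : Type 1} (F : Ordinal.{0} → α) {ξ : Ordinal}
    (hξ : ξ < κ.ord) : #(F '' Iio ξ) < lift.{1} κ :=
  mk_image_le.trans_lt (by rw [Cardinal.mk_Iio_ordinal, Cardinal.lift_lt]; exact lt_ord.1 hξ)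

theorem ord_card_eq_and_isRegular {y : Ordinal} (hω : ω ≤ y) (hy : y ≤ y.cof.ord) :
    y.card.ord = y ∧ y.card.IsRegular := by
  have hc : y.cof.ord = y := (Ordinal.ord_cof_le y).antisymm hy
  have hcard : y.card = y.cof := by rw [← card_ord y.cof, hc]
  exact ⟨by rw [hcard, hc], ⟨Ordinal.aleph0_le_card.2 hω, by rw [hcard, Ordinal.cof_ord_cof]⟩⟩

theorem exists_isClubBelow_disjoint {S : Set Ordinal} {o : Ordinal}
    (h : ¬ IsStationaryBelow (S ∩ Iio o) o) : ∃ C, IsClubBelow C o ∧ Disjoint C S := by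
  obtain ⟨C, hC, hCS⟩ : ∃ C, IsClubBelow C o ∧ ¬ (S ∩ Iio o ∩ C).Nonempty := by
    simpa [IsStationaryBelow] using h
  exact ⟨C, hC, disjoint_left.2 fun x hxC hxS => hCS ⟨x, ⟨hxS, hC.1 hxC⟩, hxC⟩⟩

theorem Cardinal.mk_insert_lt {α : Type*} {s : Set α} {c : Cardinal} (a : α) (hc : ℵ₀ ≤ c)
    (hs : #s < c) : #(insert a s : Set α) < c :=
  mk_insert_le.trans_lt (add_lt_of_lt hc hs (one_lt_aleph0.trans_le hc))

theorem Cardinal.mk_lt_of_finite {α : Type*} {s : Set α} {c : Cardinal} (hc : ℵ₀ ≤ c)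
    (hs : s.Finite) : #s < c :=
  (lt_aleph0_iff_set_finite.2 hs).trans_le hc

noncomputable def cofSeq (y i : Ordinal) : Ordinal :=
  if h : i < y.cof.ord then ((exists_isFundamentalSeq (o := y) rfl).choose ⟨i, h⟩).1 else 0

theorem cofSeq_lt {y i : Ordinal} (hi : i < y.cof.ord) : cofSeq y i < y := by
  rw [cofSeq, dif_pos hi]
  exact (Subtype.prop _ : _ ∈ Iio y)

theorem cofSeq_le (y i : Ordinal) : cofSeq y i ≤ y := by
  by_cases hi : i < y.cof.ord
  · exact (cofSeq_lt hi).le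
  · rw [cofSeq, dif_neg hi]; exact zero_le

theorem exists_le_cofSeq {x y : Ordinal} (hx : x < y) : ∃ i < y.cof.ord, x ≤ cofSeq y i := by
  obtain ⟨_, ⟨⟨i, hi⟩, rfl⟩, hxi⟩ :=
    (exists_isFundamentalSeq (o := y) rfl).choose_spec.isCofinal_range ⟨x, hx⟩
  have hi' : i < y.cof.ord := hi
  exact ⟨i, hi', by rw [cofSeq, dif_pos hi']; exact hxi⟩

noncomputable def nextIn (E : Ordinal → Set Ordinal) (a y : Ordinal) : Ordinal :=
  sInf (insert y {x ∈ E y | a < x})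

theorem nextIn_le (E : Ordinal → Set Ordinal) (a y : Ordinal) : nextIn E a y ≤ y :=
  csInf_le' (mem_insert _ _)

theorem nextIn_spec {E : Ordinal → Set Ordinal} {a y x : Ordinal} (hx : x ∈ E y) (hax : a < x)
    (hxy : x < y) : nextIn E a y ∈ E y ∧ a < nextIn E a y ∧ nextIn E a y < y := by
  have hlt : nextIn E a y < y :=
    (csInf_le' (mem_insert_of_mem y (show x ∈ {x ∈ E y | a < x} from ⟨hx, hax⟩))).trans_lt hxy
  obtain h | h := csInf_mem (insert_nonempty y {x ∈ E y | a < x})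
  · exact absurd h hlt.ne
  · exact ⟨h.1, h.2, hlt⟩

section PatternTree

variable {κ : Cardinal.{0}} (A : κ.ord.ToType → Set Ordinal)

def patternSet (a : κ.ord.ToType) (p : Set κ.ord.ToType) : Set Ordinal :=
  {α | ∀ i < a, α ∈ A i ↔ i ∈ p}

theorem patternSet_subset_inter_Iio {a b : κ.ord.ToType} (hab : a ≤ b) (p : Set κ.ord.ToType) :
    patternSet A b p ⊆ patternSet A a (p ∩ Iio a) :=
  fun _ hα i hi => (hα i (hi.trans_le hab)).trans (and_iff_left hi).symm

@[ext]
structure PatternNode where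
  top : κ.ord.ToType
  pattern : Set κ.ord.ToType
  pattern_subset : pattern ⊆ Iio top
  unbounded : IsUnboundedBelow (patternSet A top pattern) κ.ord

namespace PatternNode

variable {A}

def Lt (s t : PatternNode A) : Prop :=
  s.top < t.top ∧ t.pattern ∩ Iio s.top = s.pattern

noncomputable def height (t : PatternNode A) : Ordinal :=
  (ToType.mk.symm t.top).1

theorem height_lt_height {s t : PatternNode A} : s.height < t.height ↔ s.top < t.top := by
  simp [height]

theorem top_eq_of_height_eq {t : PatternNode A} {a : κ.ord.ToType}
    (h : t.height = (ToType.mk.symm a).1) : t.top = a :=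
  ToType.mk.symm.injective (Subtype.ext h)

theorem height_lt (t : PatternNode A) : t.height < κ.ord :=
  (ToType.mk.symm t.top).2

theorem Lt.trans {s t u : PatternNode A} (hst : s.Lt t) (htu : t.Lt u) : s.Lt u := by
  refine ⟨hst.1.trans htu.1, ?_⟩
  rw [← hst.2, ← htu.2, inter_assoc, Iio_inter_Iio, min_eq_right hst.1.le]

def restrict (t : PatternNode A) (a : κ.ord.ToType) (ha : a ≤ t.top) : PatternNode A where
  top := a
  pattern := t.pattern ∩ Iio a
  pattern_subset := inter_subset_right
  unbounded := t.unbounded.mono (patternSet_subset_inter_Iio A ha _)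

theorem existsUnique_lt_height_eq (t : PatternNode A) {o : Ordinal} (ho : o < t.height) :
    ∃! s : PatternNode A, s.Lt t ∧ s.height = o := by
  set a : κ.ord.ToType := ToType.mk ⟨o, ho.trans t.height_lt⟩
  have ha : (ToType.mk.symm a).1 = o := by simp [a]
  have hat : a < t.top := by
    rw [← ToType.mk.symm.lt_iff_lt, ← Subtype.coe_lt_coe, ha]; exact ho
  refine ⟨t.restrict a hat.le, ⟨⟨hat, rfl⟩, ha⟩, fun s ⟨hst, hs⟩ => ?_⟩
  have hsa : s.top = a := top_eq_of_height_eq (hs.trans ha.symm)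
  ext1
  · exact hsa
  · rw [← hst.2, hsa]; rfl

variable (A)

theorem exists_height_eq (hreg : κ.IsRegular) (hsl : ∀ μ < κ, 2 ^ μ < κ) {o : Ordinal}
    (ho : o < κ.ord) : ∃ t : PatternNode A, t.height = o := by
  set a : κ.ord.ToType := ToType.mk ⟨o, ho⟩
  suffices ∃ p ⊆ Iio a, IsUnboundedBelow (patternSet A a p) κ.ord by
    obtain ⟨p, hp, hpA⟩ := this
    exact ⟨⟨a, p, hp, hpA⟩, by simp [height, a]⟩
  by_contra! h
  simp only [IsUnboundedBelow, not_forall, not_exists, not_and, not_lt] at h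
  choose! ξ hξκ hξ using h
  have hsup : ⨆ p : 𝒫 (Iio a), ξ p < κ.ord := by
    refine iSup_lt_of_lt_cof ?_ fun p => hξκ p p.2
    rw [hreg.cof_ord, mk_powerset]
    exact hsl _ (by simpa using mk_Iio_lt a)
  set α := Order.succ (⨆ p : 𝒫 (Iio a), ξ p)
  set p : Set κ.ord.ToType := {i | i < a ∧ α ∈ A i}
  have hαp : α ∈ patternSet A a p := fun i hi => by simp [p, hi]
  have hξα : ξ p < α :=
    (Ordinal.le_iSup _ (⟨p, fun _ hi => hi.1⟩ : 𝒫 (Iio a))).trans_lt (Order.lt_succ _)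
  exact (hξ p (fun _ hi => hi.1) α hαp hξα).not_gt
    ((isSuccLimit_ord hreg.aleph0_le).succ_lt hsup)

theorem mk_height_eq_lt (hreg : κ.IsRegular) (hsl : ∀ μ < κ, 2 ^ μ < κ) (o : Ordinal) :
    #{t : PatternNode A // t.height = o} < κ := by
  rcases lt_or_ge o κ.ord with ho | ho
  · set a : κ.ord.ToType := ToType.mk ⟨o, ho⟩
    have htop (t : {t : PatternNode A // t.height = o}) : t.1.top = a :=
      top_eq_of_height_eq (by simpa [a] using t.2)
    let f (t : {t : PatternNode A // t.height = o}) : 𝒫 (Iio a) :=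
      ⟨t.1.pattern, htop t ▸ t.1.pattern_subset⟩
    have hf : f.Injective := fun s t h =>
      Subtype.ext (PatternNode.ext ((htop s).trans (htop t).symm) (congrArg Subtype.val h))
    refine (mk_le_of_injective hf).trans_lt ?_
    rw [mk_powerset]
    exact hsl _ (by simpa using mk_Iio_lt a)
  · have : IsEmpty {t : PatternNode A // t.height = o} :=
      ⟨fun t => (t.1.height_lt.trans_le ho).ne t.2⟩
    simpa using hreg.pos

theorem isKappaTree (hreg : κ.IsRegular) (hsl : ∀ μ < κ, 2 ^ μ < κ) :
    IsKappaTree κ (PatternNode A) Lt height :=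
  ⟨fun _ h => h.1.false, fun _ _ _ => Lt.trans, fun _ _ h => height_lt_height.2 h.1,
    fun t _ ho => t.existsUnique_lt_height_eq ho, height_lt,
    fun _ ho => exists_height_eq A hreg hsl ho, mk_height_eq_lt A hreg hsl⟩

end PatternNode

end PatternTree

theorem TreeProperty.exists_pattern_unbounded {κ : Cardinal.{0}} (htp : TreeProperty κ)
    (hreg : κ.IsRegular) (hsl : ∀ μ < κ, 2 ^ μ < κ) (A : κ.ord.ToType → Set Ordinal) :
    ∃ P : Set κ.ord.ToType, ∀ J : Set κ.ord.ToType, #J < κ →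
      IsUnboundedBelow {α | ∀ i ∈ J, α ∈ A i ↔ i ∈ P} κ.ord := by
  obtain ⟨B, hchain, hlevels⟩ := htp _ _ _ (PatternNode.isKappaTree A hreg hsl)
  set P : Set κ.ord.ToType := {i | ∃ t ∈ B, i ∈ t.pattern}
  have hcoh : ∀ t ∈ B, ∀ i < t.top, i ∈ t.pattern ↔ i ∈ P := by
    refine fun t ht i hi => ⟨fun h => ⟨t, ht, h⟩, fun ⟨s, hs, his⟩ => ?_⟩
    rcases hchain s hs t ht with rfl | hst | hts
    · exact his
    · rw [← hst.2] at his; exact his.1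
    · rw [← hts.2]; exact ⟨his, hi⟩
  refine ⟨P, fun J hJ => ?_⟩
  obtain ⟨a, ha⟩ : ∃ a, ∀ i ∈ J, i < a := by
    have : ¬ IsCofinal J := fun h =>
      (Order.cof_le h).not_gt (by rwa [cof_toType, hreg.cof_ord])
    simpa [IsCofinal] using this
  obtain ⟨t, htB, hta⟩ := hlevels (ToType.mk.symm a).1 (ToType.mk.symm a).2
  have htop : t.top = a := PatternNode.top_eq_of_height_eq hta
  refine t.unbounded.mono fun α hα i hi => ?_
  rw [hα i (htop ▸ ha i hi), hcoh t htB i (htop ▸ ha i hi)]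

def Decides (U 𝒥 : Set (Set Ordinal)) (α : Ordinal) : Prop :=
  ∀ X ∈ 𝒥, α ∈ X ↔ X ∈ U

theorem Decides.mono {U 𝒥 𝒥' : Set (Set Ordinal)} {α : Ordinal} (h : Decides U 𝒥 α)
    (h𝒥 : 𝒥' ⊆ 𝒥) : Decides U 𝒥' α :=
  fun X hX => h X (h𝒥 hX)

-- On the algebra generated by `𝒜`, this says that `U` is a `κ`-complete ultrafilter containing
-- the co-bounded sets: any `< κ` members of `𝒜` are decided by `U` at unboundedly many `α < κ`.
def IsCoboundedUltrafilter (κ : Cardinal.{0}) (𝒜 U : Set (Set Ordinal)) : Prop :=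
  ∀ 𝒥 ⊆ 𝒜, #𝒥 < lift.{1} κ → IsUnboundedBelow {α | Decides U 𝒥 α} κ.ord

theorem TreeProperty.exists_isCoboundedUltrafilter {κ : Cardinal.{0}} (htp : TreeProperty κ)
    (hreg : κ.IsRegular) (hsl : ∀ μ < κ, 2 ^ μ < κ) {𝒜 : Set (Set Ordinal)}
    (h𝒜 : #𝒜 ≤ lift.{1} κ) :
    ∃ U, IsCoboundedUltrafilter κ 𝒜 U := by
  obtain ⟨e⟩ : Nonempty (𝒜 ↪ κ.ord.ToType) := by
    rw [← lift_mk_le']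
    simpa using h𝒜
  obtain ⟨P, hP⟩ := htp.exists_pattern_unbounded hreg hsl fun i => {α | ∃ X : 𝒜, e X = i ∧ α ∈ X.1}
  refine ⟨{X | ∃ h : X ∈ 𝒜, e ⟨X, h⟩ ∈ P}, fun 𝒥 h𝒥 h𝒥κ => ?_⟩
  set J := range fun X : 𝒥 => e ⟨X, h𝒥 X.2⟩
  have hJ : #J < κ := by
    rw [← Cardinal.lift_lt.{0, 1}]
    exact mk_range_le_lift.trans_lt (by simpa using h𝒥κ)
  refine (hP J hJ).mono fun α hα X hX => ?_
  have := hα _ ⟨⟨X, hX⟩, rfl⟩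
  simpa [EmbeddingLike.apply_eq_iff_eq, h𝒥 hX] using this

theorem IsCoboundedUltrafilter.exists_decides {κ : Cardinal.{0}} {𝒜 U 𝒥 : Set (Set Ordinal)}
    (hU : IsCoboundedUltrafilter κ 𝒜 U) (hκ : ℵ₀ ≤ κ) (h𝒥 : 𝒥 ⊆ 𝒜) (h𝒥κ : #𝒥 < lift.{1} κ) :
    ∃ α < κ.ord, Decides U 𝒥 α :=
  let ⟨α, hα, _, hακ⟩ := hU 𝒥 h𝒥 h𝒥κ 0 (ord_pos.2 (aleph0_pos.trans_le hκ))
  ⟨α, hακ, hα⟩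

theorem IsCoboundedUltrafilter.mem_of_forall_decides {κ : Cardinal.{0}}
    {𝒜 U 𝒥 : Set (Set Ordinal)} (hU : IsCoboundedUltrafilter κ 𝒜 U) (hκ : ℵ₀ ≤ κ)
    {X : Set Ordinal} (hX : X ∈ 𝒜) (h𝒥 : 𝒥 ⊆ 𝒜) (h𝒥κ : #𝒥 < lift.{1} κ) {ξ : Ordinal}
    (hξ : ξ < κ.ord) (h : ∀ α, ξ < α → α < κ.ord → Decides U 𝒥 α → α ∈ X) : X ∈ U := by
  obtain ⟨α, hα, hξα, hακ⟩ :=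
    hU _ (insert_subset hX h𝒥) (mk_insert_lt X (aleph0_le_lift.2 hκ) h𝒥κ) ξ hξ
  exact (hα X (mem_insert _ _)).1 (h α hξα hακ (hα.mono (subset_insert _ _)))

section Atoms

variable (κ : Cardinal.{0}) (E : Ordinal → Set Ordinal)

def basicMaps : Set (Ordinal → Ordinal) :=
  insert (fun y => y.cof.ord) <|
    range (fun δ : Iio κ.ord => fun _ => δ.1) ∪ range (fun i : Iio κ.ord => fun y => cofSeq y i) ∪
      range (fun a : Iio κ.ord => nextIn E a)

def generatedMaps : Set (Ordinal → Ordinal) :=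
  range fun l : List (basicMaps κ E) => (l.map Subtype.val).foldr (· ∘ ·) id

def atomicSets : Set (Set Ordinal) :=
  image2 (fun f g => {β | f β < g β}) (generatedMaps κ E) (generatedMaps κ E) ∪
    image2 (fun f g => {β | f β = g β}) (generatedMaps κ E) (generatedMaps κ E) ∪
    image2 (fun f g => {β | f β ∈ E (g β)}) (generatedMaps κ E) (generatedMaps κ E)

variable {κ E}

theorem id_mem_generatedMaps : id ∈ generatedMaps κ E := ⟨[], rfl⟩

theorem comp_mem_generatedMaps {φ g : Ordinal → Ordinal} (hφ : φ ∈ basicMaps κ E)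
    (hg : g ∈ generatedMaps κ E) : φ ∘ g ∈ generatedMaps κ E := by
  obtain ⟨l, rfl⟩ := hg
  exact ⟨⟨φ, hφ⟩ :: l, rfl⟩

theorem const_mem_generatedMaps {δ : Ordinal} (hδ : δ < κ.ord) :
    (fun _ => δ) ∈ generatedMaps κ E :=
  comp_mem_generatedMaps (g := id) (mem_insert_of_mem _ (Or.inl (Or.inl ⟨⟨δ, hδ⟩, rfl⟩)))
    id_mem_generatedMaps

theorem cof_comp_mem_generatedMaps {g : Ordinal → Ordinal} (hg : g ∈ generatedMaps κ E) :
    (fun β => (g β).cof.ord) ∈ generatedMaps κ E :=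
  comp_mem_generatedMaps (mem_insert _ _) hg

theorem cofSeq_comp_mem_generatedMaps {g : Ordinal → Ordinal} (hg : g ∈ generatedMaps κ E)
    {i : Ordinal} (hi : i < κ.ord) : (fun β => cofSeq (g β) i) ∈ generatedMaps κ E :=
  comp_mem_generatedMaps (mem_insert_of_mem _ (Or.inl (Or.inr ⟨⟨i, hi⟩, rfl⟩))) hg

theorem nextIn_comp_mem_generatedMaps {g : Ordinal → Ordinal} (hg : g ∈ generatedMaps κ E)
    {a : Ordinal} (ha : a < κ.ord) : (fun β => nextIn E a (g β)) ∈ generatedMaps κ E :=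
  comp_mem_generatedMaps (mem_insert_of_mem _ (Or.inr ⟨⟨a, ha⟩, rfl⟩)) hg

theorem lt_ord_of_mem_basicMaps {φ : Ordinal → Ordinal} (hφ : φ ∈ basicMaps κ E) {y : Ordinal}
    (hy : y < κ.ord) : φ y < κ.ord := by
  obtain rfl | (⟨δ, rfl⟩ | ⟨i, rfl⟩) | ⟨a, rfl⟩ := hφ
  · exact (ord_cof_le y).trans_lt hy
  · exact δ.2
  · exact (cofSeq_le y i).trans_lt hy
  · exact (nextIn_le E a y).trans_lt hy

theorem lt_ord_of_mem_generatedMaps {g : Ordinal → Ordinal} (hg : g ∈ generatedMaps κ E)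
    {β : Ordinal} (hβ : β < κ.ord) : g β < κ.ord := by
  obtain ⟨l, rfl⟩ := hg
  induction l with
  | nil => exact hβ
  | cons φ l ih => exact lt_ord_of_mem_basicMaps φ.2 ih

theorem mk_basicMaps_le (hκ : ℵ₀ ≤ κ) : #(basicMaps κ E) ≤ lift.{1} κ := by
  have hκ' : ℵ₀ ≤ lift.{1} κ := aleph0_le_lift.2 hκ
  have hrange {f : Iio κ.ord → Ordinal → Ordinal} : #(range f) ≤ lift.{1} κ :=
    mk_range_le.trans (by simp [Cardinal.mk_Iio_ordinal])
  refine mk_insert_le.trans (add_le_of_le hκ' ?_ (one_le_aleph0.trans hκ'))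
  exact (mk_union_le _ _).trans (add_le_of_le hκ'
    ((mk_union_le _ _).trans (add_le_of_le hκ' hrange hrange)) hrange)

theorem mk_generatedMaps_le (hκ : ℵ₀ ≤ κ) : #(generatedMaps κ E) ≤ lift.{1} κ :=
  mk_range_le.trans <| (mk_list_le_max _).trans <|
    max_le (aleph0_le_lift.2 hκ) (mk_basicMaps_le hκ)

theorem mk_atomicSets_le (hκ : ℵ₀ ≤ κ) : #(atomicSets κ E) ≤ lift.{1} κ := by
  have hκ' : ℵ₀ ≤ lift.{1} κ := aleph0_le_lift.2 hκ
  have himage2 {f : (Ordinal → Ordinal) → (Ordinal → Ordinal) → Set Ordinal} :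
      #(image2 f (generatedMaps κ E) (generatedMaps κ E)) ≤ lift.{1} κ :=
    mk_image2_le.trans (mul_le_of_le hκ' (mk_generatedMaps_le hκ) (mk_generatedMaps_le hκ))
  exact (mk_union_le _ _).trans (add_le_of_le hκ'
    ((mk_union_le _ _).trans (add_le_of_le hκ' himage2 himage2)) himage2)

variable {f g : Ordinal → Ordinal}

theorem setOf_lt_mem_atomicSets (hf : f ∈ generatedMaps κ E) (hg : g ∈ generatedMaps κ E) :
    {β | f β < g β} ∈ atomicSets κ E :=
  Or.inl (Or.inl (mem_image2_of_mem hf hg))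

theorem setOf_eq_mem_atomicSets (hf : f ∈ generatedMaps κ E) (hg : g ∈ generatedMaps κ E) :
    {β | f β = g β} ∈ atomicSets κ E :=
  Or.inl (Or.inr (mem_image2_of_mem hf hg))

theorem setOf_mem_mem_atomicSets (hf : f ∈ generatedMaps κ E) (hg : g ∈ generatedMaps κ E) :
    {β | f β ∈ E (g β)} ∈ atomicSets κ E :=
  Or.inr (mem_image2_of_mem hf hg)

end Atoms

section Ultrapower

variable {κ : Cardinal.{0}} {E : Ordinal → Set Ordinal} {U : Set (Set Ordinal)}

theorem IsCoboundedUltrafilter.wellFounded (hU : IsCoboundedUltrafilter κ (atomicSets κ E) U)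
    (hκ : ℵ₀ < κ) : WellFounded fun f g : generatedMaps κ E => {β | f.1 β < g.1 β} ∈ U := by
  refine wellFounded_iff_isEmpty_descending_chain.2 ⟨fun ⟨f, hf⟩ => ?_⟩
  have hsub : range (fun n => {β | (f (n + 1)).1 β < (f n).1 β}) ⊆ atomicSets κ E :=
    range_subset_iff.2 fun n => setOf_lt_mem_atomicSets (f _).2 (f _).2
  have hcard : #(range fun n => {β | (f (n + 1)).1 β < (f n).1 β}) < lift.{1} κ := by
    rw [← Cardinal.lift_uzero #(range _)]
    exact mk_range_le_lift.trans_lt (by rw [Cardinal.lift_lt, Cardinal.mk_nat]; exact hκ)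
  obtain ⟨α, -, hα⟩ := hU.exists_decides hκ.le hsub hcard
  obtain ⟨n, hn⟩ := WellFounded.not_rel_apply_succ (r := (· < ·)) fun n => (f n).1 α
  exact hn ((hα _ ⟨n, rfl⟩).2 (hf n))

theorem IsCoboundedUltrafilter.exists_eq_const_of_not_mem
    (hU : IsCoboundedUltrafilter κ (atomicSets κ E) U) (hκ : ℵ₀ < κ) {g : Ordinal → Ordinal}
    (hg : g ∈ generatedMaps κ E) {ξ : Ordinal} (hξ : ξ < κ.ord) (h : {β | ξ < g β} ∉ U) :
    ∃ δ < κ.ord, {β | g β = δ} ∈ U := by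
  have hξ' : Order.succ ξ < κ.ord := (isSuccLimit_ord hκ.le).succ_lt hξ
  set 𝒥 := insert {β | ξ < g β} ((fun δ => {β | g β = δ}) '' Iio (Order.succ ξ))
  have h𝒥 : 𝒥 ⊆ atomicSets κ E :=
    insert_subset (setOf_lt_mem_atomicSets (const_mem_generatedMaps hξ) hg) <|
      image_subset_iff.2 fun δ hδ =>
        setOf_eq_mem_atomicSets hg (const_mem_generatedMaps (hδ.trans hξ'))
  obtain ⟨α, -, hα⟩ := hU.exists_decides hκ.le h𝒥
    (mk_insert_lt _ (aleph0_le_lift.2 hκ.le) (mk_image_Iio_lt _ hξ'))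
  have hgα : g α ≤ ξ := not_lt.1 fun h' => h ((hα _ (mem_insert _ _)).1 h')
  exact ⟨g α, hgα.trans_lt hξ,
    (hα _ (mem_insert_of_mem _ ⟨g α, Order.lt_succ_iff.2 hgα, rfl⟩)).1 rfl⟩

structure IsLeastAboveConsts (κ : Cardinal.{0}) (E : Ordinal → Set Ordinal)
    (U : Set (Set Ordinal)) (f : Ordinal → Ordinal) : Prop where
  mem : f ∈ generatedMaps κ E
  const_lt : ∀ δ < κ.ord, {β | δ < f β} ∈ U
  exists_eq_const_of_lt :
    ∀ g ∈ generatedMaps κ E, {β | g β < f β} ∈ U → ∃ δ < κ.ord, {β | g β = δ} ∈ U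

theorem IsCoboundedUltrafilter.exists_isLeastAboveConsts
    (hU : IsCoboundedUltrafilter κ (atomicSets κ E) U) (hκ : ℵ₀ < κ) :
    ∃ f, IsLeastAboveConsts κ E U f := by
  set Good := {f : generatedMaps κ E | ∀ δ < κ.ord, {β | δ < f.1 β} ∈ U}
  have hid : ⟨id, id_mem_generatedMaps⟩ ∈ Good := fun δ hδ =>
    hU.mem_of_forall_decides hκ.le
      (setOf_lt_mem_atomicSets (const_mem_generatedMaps hδ) id_mem_generatedMaps)
      (empty_subset _) (by simpa using aleph0_pos.trans hκ) hδ fun _ hδα _ _ => hδα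
  obtain ⟨f, hf, hmin⟩ := (hU.wellFounded hκ).has_min Good ⟨_, hid⟩
  refine ⟨f.1, f.2, hf, fun g hg hgf => ?_⟩
  have : ⟨g, hg⟩ ∉ Good := fun h => hmin _ h hgf
  simp only [Good, mem_ofPred_eq, not_forall] at this
  obtain ⟨ξ, hξ, h⟩ := this
  exact hU.exists_eq_const_of_not_mem hκ hg hξ h

namespace IsLeastAboveConsts

variable {f : Ordinal → Ordinal}

-- If `f β` were singular almost everywhere, its cofinality and the terms of its fundamental
-- sequence would be `U`-constant below `κ`, so that sequence would be bounded below `f β`.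
theorem setOf_ord_cof_lt_not_mem (hf : IsLeastAboveConsts κ E U f)
    (hU : IsCoboundedUltrafilter κ (atomicSets κ E) U) (hκ : ℵ₀ < κ) (hreg : κ.IsRegular) :
    {β | (f β).cof.ord < f β} ∉ U := by
  intro hsing
  have hκ' : ℵ₀ ≤ lift.{1} κ := aleph0_le_lift.2 hκ.le
  have hcof := cof_comp_mem_generatedMaps hf.mem
  obtain ⟨l, hl, hlU⟩ := hf.exists_eq_const_of_lt _ hcof hsing
  have hseq (i : Ordinal) (hi : i < l) : ∃ ε < κ.ord, {β | cofSeq (f β) i = ε} ∈ U := by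
    have hseq := cofSeq_comp_mem_generatedMaps hf.mem (hi.trans hl)
    refine hf.exists_eq_const_of_lt _ hseq <| hU.mem_of_forall_decides hκ.le
      (setOf_lt_mem_atomicSets hseq hf.mem)
      (singleton_subset_iff.2 (setOf_eq_mem_atomicSets hcof (const_mem_generatedMaps hl)))
      (by simpa using one_lt_aleph0.trans hκ) (ord_pos.2 (aleph0_pos.trans hκ))
      fun β _ _ hβ => cofSeq_lt ?_
    rw [show (f β).cof.ord = l from (hβ _ rfl).2 hlU]
    exact hi
  choose! ε hεκ hεU using hseq
  obtain ⟨η, hη, hεη⟩ :=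
    exists_lt_ord_forall_lt hreg (mk_image_Iio_lt ε hl) (image_subset_iff.2 hεκ)
  set 𝒥 := insert {β | η < f β} (insert {β | (f β).cof.ord = l}
    ((fun i => {β | cofSeq (f β) i = ε i}) '' Iio l))
  have h𝒥 : 𝒥 ⊆ atomicSets κ E :=
    insert_subset (setOf_lt_mem_atomicSets (const_mem_generatedMaps hη) hf.mem) <|
      insert_subset (setOf_eq_mem_atomicSets hcof (const_mem_generatedMaps hl)) <|
        image_subset_iff.2 fun i hi =>
          setOf_eq_mem_atomicSets (cofSeq_comp_mem_generatedMaps hf.mem (hi.trans hl))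
            (const_mem_generatedMaps (hεκ i hi))
  obtain ⟨β, -, hβ⟩ := hU.exists_decides hκ.le h𝒥
    (mk_insert_lt _ hκ' (mk_insert_lt _ hκ' (mk_image_Iio_lt _ hl)))
  have hηβ : η < f β := (hβ _ (mem_insert _ _)).2 (hf.const_lt η hη)
  have hcofβ : (f β).cof.ord = l := (hβ _ (mem_insert_of_mem _ (mem_insert _ _))).2 hlU
  obtain ⟨i, hi, hle⟩ := exists_le_cofSeq hηβ
  rw [hcofβ] at hi
  have hεi : cofSeq (f β) i = ε i :=
    (hβ _ (mem_insert_of_mem _ (mem_insert_of_mem _ ⟨i, hi, rfl⟩))).2 (hεU i hi)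
  exact (hle.trans_eq hεi).not_gt (hεη _ ⟨i, hi, rfl⟩)

theorem regularityTests_subset_atomicSets (hf : IsLeastAboveConsts κ E U f) (hκ : ℵ₀ < κ) :
    {{β | (f β).cof.ord < f β}, {β | ω < f β}} ⊆ atomicSets κ E := by
  simp only [insert_subset_iff, singleton_subset_iff]
  exact ⟨setOf_lt_mem_atomicSets (cof_comp_mem_generatedMaps hf.mem) hf.mem,
    setOf_lt_mem_atomicSets (const_mem_generatedMaps (omega0_lt_ord.2 hκ)) hf.mem⟩

theorem isRegular_of_decides (hf : IsLeastAboveConsts κ E U f)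
    (hU : IsCoboundedUltrafilter κ (atomicSets κ E) U) (hκ : ℵ₀ < κ) (hreg : κ.IsRegular)
    {β : Ordinal} (hβ : Decides U {{β | (f β).cof.ord < f β}, {β | ω < f β}} β) :
    (f β).card.ord = f β ∧ (f β).card.IsRegular :=
  ord_card_eq_and_isRegular
    ((hβ _ (mem_insert_of_mem _ rfl)).2 (hf.const_lt ω (omega0_lt_ord.2 hκ))).le
    (not_lt.1 fun h => hf.setOf_ord_cof_lt_not_mem hU hκ hreg ((hβ _ (mem_insert _ _)).1 h))

theorem isUnboundedBelow_setOf_mem (hf : IsLeastAboveConsts κ E U f)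
    (hU : IsCoboundedUltrafilter κ (atomicSets κ E) U) (hκ : ℵ₀ < κ) (hreg : κ.IsRegular)
    (hE : ∀ y < κ.ord, y.card.ord = y → y.card.IsRegular → IsClubBelow (E y) y) :
    IsUnboundedBelow {δ | {β | δ ∈ E (f β)} ∈ U} κ.ord := by
  intro a ha
  have hκ' : ℵ₀ ≤ lift.{1} κ := aleph0_le_lift.2 hκ.le
  have h0 : (0 : Ordinal) < κ.ord := ord_pos.2 (aleph0_pos.trans hκ)
  set 𝒦 : Set (Set Ordinal) := insert {β | a < f β} {{β | (f β).cof.ord < f β}, {β | ω < f β}}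
  have h𝒦 : 𝒦 ⊆ atomicSets κ E :=
    insert_subset (setOf_lt_mem_atomicSets (const_mem_generatedMaps ha) hf.mem)
      (hf.regularityTests_subset_atomicSets hκ)
  have hnext (β : Ordinal) (hβ : β < κ.ord) (hdec : Decides U 𝒦 β) :
      nextIn E a (f β) ∈ E (f β) ∧ a < nextIn E a (f β) ∧ nextIn E a (f β) < f β := by
    obtain ⟨hc, hr⟩ := hf.isRegular_of_decides hU hκ hreg (hdec.mono (subset_insert _ _))
    have hclub := hE _ (lt_ord_of_mem_generatedMaps hf.mem hβ) hc hr
    obtain ⟨x, hx, hax⟩ := hclub.2.1 a ((hdec _ (mem_insert _ _)).2 (hf.const_lt a ha))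
    exact nextIn_spec hx hax (hclub.1 hx)
  have hg := nextIn_comp_mem_generatedMaps hf.mem ha
  obtain ⟨δ, hδ, hδU⟩ := hf.exists_eq_const_of_lt _ hg <|
    hU.mem_of_forall_decides hκ.le (setOf_lt_mem_atomicSets hg hf.mem) h𝒦
      (mk_lt_of_finite hκ' (toFinite _)) h0 fun β _ hβ hdec => (hnext β hβ hdec).2.2
  have h𝒦' : insert {β | nextIn E a (f β) = δ} 𝒦 ⊆ atomicSets κ E :=
    insert_subset (setOf_eq_mem_atomicSets hg (const_mem_generatedMaps hδ)) h𝒦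
  obtain ⟨β, hβκ, hβ⟩ := hU.exists_decides hκ.le h𝒦' (mk_lt_of_finite hκ' (toFinite _))
  refine ⟨δ, ?_, ?_, hδ⟩
  · refine hU.mem_of_forall_decides hκ.le
      (setOf_mem_mem_atomicSets (const_mem_generatedMaps hδ) hf.mem) h𝒦'
      (mk_lt_of_finite hκ' (toFinite _)) h0 fun β' _ hβ' hdec => ?_
    rw [mem_ofPred_eq, ← (hdec _ (mem_insert _ _)).2 hδU]
    exact (hnext β' hβ' (hdec.mono (subset_insert _ _))).1
  · rw [← (hβ _ (mem_insert _ _)).2 hδU]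
    exact (hnext β hβκ (hβ.mono (subset_insert _ _))).2.1

theorem not_isStationaryBelow (hf : IsLeastAboveConsts κ E U f)
    (hU : IsCoboundedUltrafilter κ (atomicSets κ E) U) (hκ : ℵ₀ < κ) (hreg : κ.IsRegular)
    {S : Set Ordinal} (hE : ∀ y < κ.ord, y.card.ord = y → y.card.IsRegular →
      IsClubBelow (E y) y ∧ Disjoint (E y) S) :
    ¬ IsStationaryBelow S κ.ord := by
  intro hS
  have hκ' : ℵ₀ ≤ lift.{1} κ := aleph0_le_lift.2 hκ.le
  set D := {δ | {β | δ ∈ E (f β)} ∈ U}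
  have hD : IsUnboundedBelow D κ.ord :=
    hf.isUnboundedBelow_setOf_mem hU hκ hreg fun y hy hc hr => (hE y hy hc hr).1
  obtain ⟨σ, hσS, hσκ, hσ0, hσD⟩ := hS _ (isClubBelow_accBelow (by rwa [hreg.cof_ord]) hD)
  set 𝒥 : Set (Set Ordinal) := {{β | (f β).cof.ord < f β}, {β | ω < f β}} ∪
    insert {β | σ < f β} ((fun δ => {β | δ ∈ E (f β)}) '' (D ∩ Iio σ))
  have h𝒥 : 𝒥 ⊆ atomicSets κ E :=
    union_subset (hf.regularityTests_subset_atomicSets hκ) <|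
      insert_subset (setOf_lt_mem_atomicSets (const_mem_generatedMaps hσκ) hf.mem) <|
        image_subset_iff.2 fun δ hδ =>
          setOf_mem_mem_atomicSets (const_mem_generatedMaps (hδ.2.trans hσκ)) hf.mem
  have hcard : #𝒥 < lift.{1} κ :=
    (mk_union_le _ _).trans_lt (add_lt_of_lt hκ' (mk_lt_of_finite hκ' (toFinite _))
      (mk_insert_lt _ hκ' ((mk_le_mk_of_subset (image_mono inter_subset_right)).trans_lt
        (mk_image_Iio_lt _ hσκ))))
  obtain ⟨β, hβκ, hβ⟩ := hU.exists_decides hκ.le h𝒥 hcard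
  obtain ⟨hc, hr⟩ := hf.isRegular_of_decides hU hκ hreg (hβ.mono subset_union_left)
  obtain ⟨hclub, hdisj⟩ := hE _ (lt_ord_of_mem_generatedMaps hf.mem hβκ) hc hr
  have hσβ : σ < f β := (hβ _ (Or.inr (mem_insert _ _))).2 (hf.const_lt σ hσκ)
  have hσE : σ ∈ E (f β) := hclub.2.2 σ hσβ hσ0 fun b hb => by
    obtain ⟨δ, hδD, hbδ, hδσ⟩ := hσD b hb
    exact ⟨δ, (hβ _ (Or.inr (mem_insert_of_mem _ ⟨δ, ⟨hδD, hδσ⟩, rfl⟩))).2 hδD, hbδ, hδσ⟩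
  exact disjoint_left.1 hdisj hσE hσS

end IsLeastAboveConsts

end Ultrapower

theorem stationary_reflection_of_weaklyCompact_general (κ : Cardinal.{0})
    (hwc : WeaklyCompact κ) (S : Set Ordinal)
    (hstat : IsStationaryBelow S κ.ord) :
    ∃ α < κ.ord, α.card.ord = α ∧ α.card.IsRegular ∧
      IsStationaryBelow (S ∩ Set.Iio α) α := by
  obtain ⟨⟨hreg, hκ, hsl⟩, htp⟩ := hwc
  rw [aleph_zero] at hκ
  by_contra! hnot
  choose! E hE using fun y hy hc hr => exists_isClubBelow_disjoint (hnot y hy hc hr)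
  obtain ⟨U, hU⟩ := htp.exists_isCoboundedUltrafilter hreg hsl (mk_atomicSets_le (E := E) hκ.le)
  obtain ⟨f, hf⟩ := hU.exists_isLeastAboveConsts hκ
  exact hf.not_isStationaryBelow hU hκ hreg hE hstat

/-- If `κ` is weakly compact, then every stationary subset of `κ` reflects at some
regular `α < κ`. -/
theorem stationary_reflection_of_weaklyCompact (κ : Cardinal.{0})
    (hwc : WeaklyCompact κ) (S : Set Ordinal) (hS : S ⊆ Set.Iio κ.ord)
    (hstat : IsStationaryBelow S κ.ord) :
    ∃ α < κ.ord, α.card.ord = α ∧ α.card.IsRegular ∧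
      IsStationaryBelow (S ∩ Set.Iio α) α :=
  stationary_reflection_of_weaklyCompact_general κ hwc S hstat
end

section
/- Every uncountable coanalytic (Π¹₁) subset of the reals either contains a perfect subset or has cardinality exactly ℵ₁. -/
open Cardinal MeasureTheory

/-!
Write `A = (range f)ᶜ` with `f : (ℕ → ℕ) → ℝ` continuous and sift it by the closed sets
`K s = closure (f '' N_s)`: a point `x` lies in `A` exactly when the tree `{s | x ∈ K s}` has no
infinite branch. Such a tree on the countable set of nodes has a countable rank, and the points
whose tree has rank at most `α` form a Borel set, so `A` is a union of `ℵ₁` Borel sets. If one of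
them is uncountable it contains a perfect set, by the perfect set property of Borel sets;
otherwise `#A ≤ ℵ₁`.
-/

open Set Filter Topology Ordinal PiNat

theorem Ordinal.countable_Iio_of_lt_omega_one {α : Ordinal} (hα : α < ω₁) :
    (Iio α).Countable := by
  rwa [← le_aleph0_iff_set_countable, Cardinal.mk_Iio_ordinal, lift_le_aleph0,
    ← lt_aleph_one_iff, ← lt_omega_iff_card_lt]

theorem Cardinal.mk_biUnion_lt_omega_one_le {X : Type*} {D : Ordinal.{0} → Set X}
    (hD : ∀ α < ω₁, (D α).Countable) : #(⋃ α < ω₁, D α) ≤ ℵ₁ :=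
  mk_biUnion_le_of_le_lift (by simp) (aleph0_le_aleph 1) D fun α hα =>
    (le_aleph0_iff_set_countable.2 (hD α hα)).trans (aleph0_le_aleph 1)

theorem PiNat.hasBasis_nhds_cylinder {E : ℕ → Type*} [∀ n, TopologicalSpace (E n)]
    [∀ n, DiscreteTopology (E n)] (x : ∀ n, E n) :
    (𝓝 x).HasBasis (fun _ : ℕ => True) (cylinder x) := by
  refine ⟨fun U => ⟨fun hU => ?_, fun ⟨n, _, hn⟩ =>
    mem_of_superset ((isOpen_cylinder E x n).mem_nhds (self_mem_cylinder x n)) hn⟩⟩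
  obtain ⟨_, ⟨z, n, rfl⟩, hx, hU⟩ := (isTopologicalBasis_cylinders E).mem_nhds_iff.1 hU
  exact ⟨n, trivial, by rwa [mem_cylinder_iff_eq.1 hx]⟩

theorem forall_mem_closure_image_cylinder_iff {X : Type*} [TopologicalSpace X] [T2Space X]
    {f : (ℕ → ℕ) → X} (hf : Continuous f) {x : X} {y : ℕ → ℕ} :
    (∀ n, x ∈ closure (f '' cylinder y n)) ↔ f y = x := by
  refine ⟨fun h => ?_, fun h n => h ▸ subset_closure (mem_image_of_mem f (self_mem_cylinder y n))⟩
  have hcluster : ClusterPt x (map f (𝓝 y)) := by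
    refine clusterPt_iff_forall_mem_closure.2 fun s hs => ?_
    obtain ⟨n, -, hn⟩ := ((hasBasis_nhds_cylinder y).map f).mem_iff.1 hs
    exact closure_mono hn (h n)
  exact (eq_of_nhds_neBot (hcluster.mono (hf.tendsto y))).symm

theorem exists_perfect_nonempty_of_continuous_injective {X : Type*} [TopologicalSpace X]
    [T2Space X] [SecondCountableTopology X] {s : Set X} {g : (ℕ → Bool) → X} (hg : Continuous g)
    (hinj : Function.Injective g) (hgs : range g ⊆ s) : ∃ C ⊆ s, Perfect C ∧ C.Nonempty := by
  have hcantor : ¬ Countable (ℕ → Bool) := by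
    rw [← mk_le_aleph0_iff]
    simpa using aleph0_lt_continuum
  have hrange : ¬ (range g).Countable := fun h =>
    have := h.to_subtype
    hcantor (Equiv.ofInjective g hinj).injective.countable
  obtain ⟨C, hC, hCne, hCg⟩ :=
    exists_perfect_nonempty_of_isClosed_of_not_countable (isCompact_range hg).isClosed hrange
  exact ⟨C, hCg.trans hgs, hC, hCne⟩

theorem MeasurableSet.exists_nat_bool_injection_of_not_countable {X : Type*}
    [TopologicalSpace X] [PolishSpace X] [MeasurableSpace X] [BorelSpace X] {s : Set X}
    (hs : MeasurableSet s) (hunc : ¬ s.Countable) :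
    ∃ g : (ℕ → Bool) → X, range g ⊆ s ∧ Continuous g ∧ Function.Injective g := by
  obtain ⟨t, hle, ht, hclosed, -⟩ := hs.isClopenable
  obtain ⟨g, hgs, hg, hinj⟩ :=
    @IsClosed.exists_nat_bool_injection_of_not_countable X t ht s hclosed hunc
  exact ⟨g, hgs, continuous_le_rng hle hg, hinj⟩

theorem MeasurableSet.exists_perfect_nonempty_of_not_countable {X : Type*} [TopologicalSpace X]
    [PolishSpace X] [MeasurableSpace X] [BorelSpace X] {s : Set X} (hs : MeasurableSet s)
    (hunc : ¬ s.Countable) : ∃ C ⊆ s, Perfect C ∧ C.Nonempty :=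
  let ⟨_, hgs, hg, hinj⟩ := hs.exists_nat_bool_injection_of_not_countable hunc
  exists_perfect_nonempty_of_continuous_injective hg hinj hgs

namespace LusinSieve

variable {X : Type*} (K : List ℕ → Set X)

/-- Nodes are reversed finite sequences, as produced by `PiNat.res`, so the children of `s` are
the lists `n :: s`. A point `x` lies in `rankLE K α s` when the subtree of `{t | x ∈ K t}` below `s`
is empty or has rank at most `α`. -/
def rankLE (α : Ordinal.{0}) (s : List ℕ) : Set X :=
  (K s)ᶜ ∪ ⋂ n : ℕ, ⋃ β : Iio α, rankLE β.1 (n :: s)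
termination_by α
decreasing_by exact β.2

theorem rankLE_eq (α : Ordinal.{0}) (s : List ℕ) :
    rankLE K α s = (K s)ᶜ ∪ ⋂ n : ℕ, ⋃ β : Iio α, rankLE K β.1 (n :: s) := by
  rw [rankLE]

variable {K}

theorem measurableSet_rankLE [MeasurableSpace X] (hK : ∀ s, MeasurableSet (K s))
    {α : Ordinal.{0}} (hα : α < ω₁) (s : List ℕ) : MeasurableSet (rankLE K α s) := by
  induction α using WellFoundedLT.induction generalizing s with
  | _ α ih =>
    have := (countable_Iio_of_lt_omega_one hα).to_subtype
    rw [rankLE_eq]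
    exact (hK s).compl.union (.iInter fun n => .iUnion fun β => ih β β.2 (β.2.trans hα) _)

theorem notMem_rankLE_res {x : X} {y : ℕ → ℕ} (hy : ∀ n, x ∈ K (res y n)) (α : Ordinal.{0})
    (n : ℕ) : x ∉ rankLE K α (res y n) := by
  induction α using WellFoundedLT.induction generalizing n with
  | _ α ih =>
    rw [rankLE_eq]
    rintro (hx | hx)
    · exact hx (hy n)
    · obtain ⟨β, hβ⟩ := mem_iUnion.1 (mem_iInter.1 hx (y n))
      exact ih β β.2 (n + 1) hβ

theorem exists_lt_omega_one_mem_rankLE {x : X} (hx : ∀ y : ℕ → ℕ, ∃ n, x ∉ K (res y n)) :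
    ∃ α < ω₁, x ∈ rankLE K α [] := by
  -- `r t s`: `t` is a child of the node `s` of the tree of `x`; a descending chain from `[]`
  -- spells out a branch `res y`.
  let r : List ℕ → List ℕ → Prop := fun t s => x ∈ K s ∧ ∃ n, t = n :: s
  have hacc : Acc r [] := by
    by_contra hnot
    obtain ⟨a, ha0, ha⟩ := not_acc_iff_exists_descending_chain.1 hnot
    choose haK y hy using ha
    have ha_res : ∀ n, a n = res y n := by
      intro n
      induction n with
      | zero => exact ha0
      | succ n ih => rw [hy n, ih]; rfl
    obtain ⟨n, hn⟩ := hx y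
    exact hn (ha_res n ▸ haK n)
  suffices ∀ s, Acc r s → ∃ α < ω₁, x ∈ rankLE K α s from this [] hacc
  intro s hs
  induction hs with
  | intro s _ ih =>
    by_cases hxs : x ∈ K s
    · choose α hα hxα using fun n => ih (n :: s) ⟨hxs, n, rfl⟩
      refine ⟨⨆ n, Order.succ (α n),
        iSup_lt_omega_one fun n => (isSuccLimit_omega 1).succ_lt (hα n), ?_⟩
      rw [rankLE_eq]
      refine Or.inr (mem_iInter.2 fun n => mem_iUnion.2 ⟨⟨α n, ?_⟩, hxα n⟩)
      exact (Order.lt_succ (α n)).trans_le (Ordinal.le_iSup _ n)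
    · exact ⟨0, omega_pos 1, by rw [rankLE_eq]; exact Or.inl hxs⟩

theorem biUnion_rankLE_eq :
    ⋃ α < ω₁, rankLE K α [] = {x | ∀ y : ℕ → ℕ, ∃ n, x ∉ K (res y n)} := by
  ext x
  simp only [mem_iUnion, mem_ofPred_eq, exists_prop]
  refine ⟨?_, exists_lt_omega_one_mem_rankLE⟩
  rintro ⟨α, -, hx⟩ y
  by_contra! hy
  exact notMem_rankLE_res hy α 0 hx

end LusinSieve

theorem MeasureTheory.AnalyticSet.exists_isClosed_sieve {X : Type*} [TopologicalSpace X]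
    [T2Space X] {s : Set X} (hs : AnalyticSet s) :
    ∃ K : List ℕ → Set X, (∀ t, IsClosed (K t)) ∧
      sᶜ = {x | ∀ y : ℕ → ℕ, ∃ n, x ∉ K (res y n)} := by
  rw [AnalyticSet] at hs
  rcases hs with rfl | ⟨f, hf, rfl⟩
  · exact ⟨fun _ => ∅, fun _ => isClosed_empty, by simp⟩
  · refine ⟨fun t => closure (f '' {z | res z t.length = t}), fun _ => isClosed_closure, ?_⟩
    ext x
    simp only [res_length, ← cylinder_eq_res, mem_compl_iff, mem_range, mem_ofPred_eq]
    simp only [← forall_mem_closure_image_cylinder_iff hf, not_exists, not_forall]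

open LusinSieve in
/-- Every uncountable coanalytic (`Π¹₁`) subset of the reals either contains a
nonempty perfect subset or has cardinality exactly `ℵ₁`. -/
theorem uncountable_coanalytic_perfect_or_aleph_one (A : Set ℝ)
    (hco : AnalyticSet Aᶜ) (hunc : ¬ A.Countable) :
    (∃ C ⊆ A, Perfect C ∧ C.Nonempty) ∨ #A = aleph 1 := by
  obtain ⟨K, hK, hA⟩ := hco.exists_isClosed_sieve
  rw [compl_compl, ← biUnion_rankLE_eq] at hA
  by_cases hsmall : ∀ α < ω₁, (rankLE K α []).Countable
  · right
    refine le_antisymm (hA ▸ mk_biUnion_lt_omega_one_le hsmall) ?_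
    rwa [← le_aleph0_iff_set_countable, ← lt_aleph_one_iff, not_lt] at hunc
  · left
    push Not at hsmall
    obtain ⟨α, hα, hα_unc⟩ := hsmall
    have hα_sub : rankLE K α [] ⊆ A :=
      hA ▸ subset_biUnion_of_mem (u := fun α => rankLE K α []) hα
    have hα_meas : MeasurableSet (rankLE K α []) :=
      measurableSet_rankLE (fun t => (hK t).measurableSet) hα []
    obtain ⟨C, hC, hCp, hCne⟩ := hα_meas.exists_perfect_nonempty_of_not_countable hα_unc
    exact ⟨C, hC.trans hα_sub, hCp, hCne⟩
end

section
/- Martin's Axiom for σ-centered partial orders together with 2^ℵ₀ > ℵ₁ implies that every set of reals of size ℵ₁ is a Q-set. -/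
open Cardinal

/-- A preorder `P` is σ-centered: it can be split into countably many centered pieces,
where a piece is centered if any finitely many of its elements have a common lower bound. -/
def SigmaCentered (P : Type) [Preorder P] : Prop :=
  ∃ c : P → ℕ, ∀ s : Finset P, s.Nonempty → (∀ p ∈ s, ∀ q ∈ s, c p = c q) →
    ∃ r : P, ∀ p ∈ s, r ≤ p

/-- `d` is dense in the preorder `P`. -/
def DenseSubset (P : Type) [Preorder P] (d : Set P) : Prop :=
  ∀ p : P, ∃ q ∈ d, q ≤ p

/-- `G` is a filter on the preorder `P`: upward closed and downward directed. -/
def IsPFilter (P : Type) [Preorder P] (G : Set P) : Prop :=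
  G.Nonempty ∧ (∀ p ∈ G, ∀ q, p ≤ q → q ∈ G) ∧
    ∀ p ∈ G, ∀ q ∈ G, ∃ r ∈ G, r ≤ p ∧ r ≤ q

/-- Martin's Axiom for σ-centered partial orders: for every σ-centered preorder and
every family of fewer than `2^ℵ₀` dense subsets there is a filter meeting all of them. -/
def MASigmaCentered : Prop :=
  ∀ (P : Type) (_ : Preorder P), SigmaCentered P →
    ∀ D : Set (Set P), #D < Cardinal.continuum → (∀ d ∈ D, DenseSubset P d) →
      ∃ G : Set P, IsPFilter P G ∧ ∀ d ∈ D, (G ∩ d).Nonempty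

/-!
Split `A` into `B` and `C = A \ B`. Conditions of the Silver–Booth poset are finite sets of
rational intervals tagged by natural numbers, together with finitely many points of `C`; a stronger
condition may only add intervals missing the points already promised. Conditions with the same
intervals are compatible, so the poset is σ-centered. A filter meeting the `#A < 𝔠` dense sets
"`b` lies in an interval tagged `n`" (`b ∈ B`) and "`x` is promised" (`x ∈ C`) yields the open sets
`Uₙ = ⋃ {intervals tagged n}`, whose intersection contains `B` and misses `C`: a point `x` promised
by some condition lies outside every interval with a tag that this condition does not yet use.
-/

open Set Topology

theorem exists_rat_Ioo_subset_of_mem_nhds {U : Set ℝ} {b : ℝ} (hU : U ∈ 𝓝 b) :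
    ∃ a c : ℚ, b ∈ Ioo (a : ℝ) c ∧ Ioo (a : ℝ) c ⊆ U := by
  obtain ⟨l, u, ⟨hlb, hbu⟩, hsub⟩ := mem_nhds_iff_exists_Ioo_subset.1 hU
  obtain ⟨a, hla, hab⟩ := exists_rat_btwn hlb
  obtain ⟨c, hbc, hcu⟩ := exists_rat_btwn hbu
  exact ⟨a, c, ⟨hab, hbc⟩, (Ioo_subset_Ioo hla.le hcu.le).trans hsub⟩

namespace SilverBooth

/-- A code `(n, a, c)` stands for the interval `(a, c)` with tag `n`. -/
def interval (e : ℕ × ℚ × ℚ) : Set ℝ := Ioo (e.2.1 : ℝ) e.2.2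

structure Condition (C : Set ℝ) where
  intervals : Finset (ℕ × ℚ × ℚ)
  promised : Finset ℝ
  promised_subset : ↑promised ⊆ C

variable {C : Set ℝ}

instance : Preorder (Condition C) where
  le q p := p.intervals ⊆ q.intervals ∧ p.promised ⊆ q.promised ∧
    ∀ e ∈ q.intervals \ p.intervals, ∀ x ∈ p.promised, x ∉ interval e
  le_refl p := ⟨subset_rfl, subset_rfl, by simp⟩
  le_trans r q p hrq hqp := by
    refine ⟨hqp.1.trans hrq.1, hqp.2.1.trans hrq.2.1, fun e he x hx => ?_⟩
    by_cases heq : e ∈ q.intervals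
    · exact hqp.2.2 e (Finset.mem_sdiff.2 ⟨heq, (Finset.mem_sdiff.1 he).2⟩) x hx
    · exact hrq.2.2 e (Finset.mem_sdiff.2 ⟨(Finset.mem_sdiff.1 he).1, heq⟩) x (hqp.2.1 hx)

theorem le_of_intervals_eq {p q : Condition C} (h : q.intervals = p.intervals)
    (hpromised : p.promised ⊆ q.promised) : q ≤ p :=
  ⟨h.ge, hpromised, by simp [h]⟩

theorem sigmaCentered : SigmaCentered (Condition C) := by
  classical
  refine ⟨fun p => Encodable.encode p.intervals, fun s ⟨p₀, hp₀⟩ hcode => ?_⟩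
  have hpromised : ↑(s.biUnion Condition.promised) ⊆ C := by
    simpa using fun p _ => p.promised_subset
  refine ⟨⟨p₀.intervals, s.biUnion Condition.promised, hpromised⟩, fun p hp => ?_⟩
  exact le_of_intervals_eq (Encodable.encode_injective (hcode p₀ hp₀ p hp))
    (Finset.subset_biUnion_of_mem Condition.promised hp)

def covering (n : ℕ) (b : ℝ) : Set (Condition C) :=
  {p | ∃ e ∈ p.intervals, e.1 = n ∧ b ∈ interval e}

def promising (x : ℝ) : Set (Condition C) := {p | x ∈ p.promised}

theorem denseSubset_covering (n : ℕ) {b : ℝ} (hb : b ∉ C) :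
    DenseSubset (Condition C) (covering n b) := by
  intro p
  have hbp : b ∉ (p.promised : Set ℝ) := fun h => hb (p.promised_subset h)
  obtain ⟨a, c, hbac, hsub⟩ := exists_rat_Ioo_subset_of_mem_nhds
    (p.promised.finite_toSet.isClosed.isOpen_compl.mem_nhds hbp)
  refine ⟨⟨insert (n, a, c) p.intervals, p.promised, p.promised_subset⟩,
    ⟨(n, a, c), Finset.mem_insert_self _ _, rfl, hbac⟩,
    Finset.subset_insert _ _, subset_rfl, fun e he x hx hxe => ?_⟩
  obtain ⟨he, hep⟩ := Finset.mem_sdiff.1 he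
  obtain rfl : e = (n, a, c) := (Finset.mem_insert.1 he).resolve_right hep
  exact hsub hxe hx

theorem denseSubset_promising {x : ℝ} (hx : x ∈ C) :
    DenseSubset (Condition C) (promising x) := by
  classical
  intro p
  have hpromised : ↑(insert x p.promised) ⊆ C := by
    simpa [insert_subset_iff] using ⟨hx, p.promised_subset⟩
  exact ⟨⟨p.intervals, insert x p.promised, hpromised⟩, Finset.mem_insert_self _ _,
    le_of_intervals_eq rfl (Finset.subset_insert _ _)⟩

def genericOpen (G : Set (Condition C)) (n : ℕ) : Set ℝ :=
  ⋃ p ∈ G, ⋃ e ∈ p.intervals, ⋃ (_ : e.1 = n), interval e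

theorem isOpen_genericOpen (G : Set (Condition C)) (n : ℕ) : IsOpen (genericOpen G n) :=
  isOpen_biUnion fun _ _ => isOpen_biUnion fun _ _ => isOpen_iUnion fun _ => isOpen_Ioo

theorem mem_genericOpen {G : Set (Condition C)} {n : ℕ} {b : ℝ}
    (hG : (G ∩ covering n b).Nonempty) : b ∈ genericOpen G n := by
  obtain ⟨p, hpG, e, he, hen, hbe⟩ := hG
  exact mem_biUnion hpG (mem_biUnion he (mem_iUnion_of_mem hen hbe))

theorem notMem_interval_of_mem_promised {G : Set (Condition C)} (hG : IsPFilter _ G)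
    {p q : Condition C} (hp : p ∈ G) (hq : q ∈ G) {e : ℕ × ℚ × ℚ} (heq : e ∈ q.intervals)
    (hep : e ∉ p.intervals) {x : ℝ} (hx : x ∈ p.promised) : x ∉ interval e := by
  obtain ⟨r, -, hrp, hrq⟩ := hG.2.2 p hp q hq
  exact hrp.2.2 e (Finset.mem_sdiff.2 ⟨hrq.1 heq, hep⟩) x hx

theorem notMem_iInter_genericOpen {G : Set (Condition C)} (hG : IsPFilter _ G) {x : ℝ}
    (hxG : (G ∩ promising x).Nonempty) : x ∉ ⋂ n, genericOpen G n := by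
  obtain ⟨p, hpG, hxp⟩ := hxG
  obtain ⟨n, hn⟩ := (p.intervals.image Prod.fst).exists_notMem
  intro hx
  obtain ⟨q, hqG, e, heq, hen, hxe⟩ : ∃ q ∈ G, ∃ e ∈ q.intervals, e.1 = n ∧ x ∈ interval e := by
    simpa [genericOpen] using mem_iInter.1 hx n
  have hep : e ∉ p.intervals := fun he => hn (Finset.mem_image.2 ⟨e, he, hen⟩)
  exact notMem_interval_of_mem_promised hG hpG hqG heq hep hxp hxe

end SilverBooth

open SilverBooth in
theorem exists_isGδ_subset_of_disjoint (hMA : MASigmaCentered) {B C : Set ℝ}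
    (hBC : Disjoint B C) (hB : #B < 𝔠) (hC : #C < 𝔠) :
    ∃ S : Set ℝ, IsGδ S ∧ B ⊆ S ∧ Disjoint S C := by
  let D : Set (Set (Condition C)) :=
    range (fun nb : ℕ × B => covering nb.1 nb.2) ∪ range (fun x : C => promising x)
  have hD : #D < 𝔠 := by
    refine (mk_union_le _ _).trans_lt (add_lt_of_lt aleph0_le_continuum ?_ ?_)
    · refine mk_range_le.trans_lt ?_
      rw [mk_prod, lift_id, lift_id, mk_nat]
      exact mul_lt_of_lt aleph0_le_continuum aleph0_lt_continuum hB
    · exact mk_range_le.trans_lt hC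
  have hDdense : ∀ d ∈ D, DenseSubset (Condition C) d := by
    rintro d (⟨⟨n, b, hb⟩, rfl⟩ | ⟨⟨x, hx⟩, rfl⟩)
    · exact denseSubset_covering n (hBC.notMem_of_mem_left hb)
    · exact denseSubset_promising hx
  obtain ⟨G, hG, hGD⟩ := hMA _ _ sigmaCentered D hD hDdense
  refine ⟨⋂ n, genericOpen G n, .iInter fun n => (isOpen_genericOpen G n).isGδ, ?_, ?_⟩
  · exact fun b hb => mem_iInter.2 fun n =>
      mem_genericOpen (hGD _ (Or.inl ⟨(n, ⟨b, hb⟩), rfl⟩))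
  · exact disjoint_right.2 fun x hx =>
      notMem_iInter_genericOpen hG (hGD _ (Or.inr ⟨⟨x, hx⟩, rfl⟩))

theorem isQSet_of_mk_lt_continuum (hMA : MASigmaCentered) {A : Set ℝ} (hA : #A < 𝔠) :
    IsQSet A := by
  intro B hBA
  have hcard : ∀ {T : Set ℝ}, T ⊆ A → #T < 𝔠 := fun hT => (mk_le_mk_of_subset hT).trans_lt hA
  obtain ⟨S, hS, hBS, hSC⟩ := exists_isGδ_subset_of_disjoint hMA disjoint_sdiff_right
    (hcard hBA) (hcard sdiff_subset)
  refine ⟨S, hS, subset_antisymm (subset_inter hBS hBA) fun x ⟨hxS, hxA⟩ => ?_⟩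
  by_contra hxB
  exact hSC.notMem_of_mem_left hxS ⟨hxA, hxB⟩

/-- MA(σ-centered) together with `2^ℵ₀ > ℵ₁` implies every set of reals of size `ℵ₁`
is a Q-set. -/
theorem qset_of_MA_sigma_centered (hMA : MASigmaCentered)
    (hnCH : aleph 1 < Cardinal.continuum) :
    ∀ A : Set ℝ, #A = aleph 1 → IsQSet A := by
  intro A hA
  -- `hnCH` lives in an arbitrary universe; lifting `ℵ₁` there brings it down to `Cardinal.{0}`.
  refine isQSet_of_mk_lt_continuum hMA (hA ▸ lift_lt_continuum.1 ?_)
  simpa using hnCH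
end

section
/- There exists a separable, normal, nonmetrizable Moore space if and only if there exists an uncountable Q-set of reals. -/
/-!
If `X` is a nonmetrizable Moore space, some closed discrete `D ⊆ X` is uncountable: a Moore space
whose closed discrete sets are all countable is Lindelöf, hence second countable, hence
metrizable. Given a development `G` and a dense sequence `d`, code `x` by the `0/1` matrix
`[d m ∈ St(x, G n)]`. For open `U`, the points of `closure U` are exactly those whose code lies
in the `Gδ` set of matrices `g` with `∀ n, ∃ m, d m ∈ U ∧ g n m = 1`. By normality every `B ⊆ D` is
`D ∩ closure U` for some open `U`, so the codes of `D`, embedded in `ℝ` through the Cantor set,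
form an uncountable Q-set.

Conversely, over `A ⊆ ℝ` take the points of `A` together with the rational points `(q, t)` of the
plane, the latter isolated and `a ∈ A` having the cones `{|q - a| < t < 1 / (n + 1)}` as basic
neighbourhoods (cones play the role of Heath's tangent discs). This is a separable Moore space in
which `A` is closed discrete, so it is not metrizable when `A` is uncountable. If `A` is a Q-set,
disjoint `B, C ⊆ A` are `Gδ` in `A`, which yields radii `r > 0` with
`min (r a) (r b) ≤ |a - b|` for `a ∈ B`, `b ∈ C`, hence disjoint cones over `B` and over `C`:
the space is normal.
-/

open Set Filter Topology TopologicalSpace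

section ClosedDiscrete

variable {X : Type*} [TopologicalSpace X]

theorem IsClosed.of_subset_isClosed_isDiscrete {S B : Set X} (hS : IsClosed S)
    (hSd : IsDiscrete S) (hB : B ⊆ S) : IsClosed B :=
  (isClosed_and_discrete_iff.2 fun x =>
    (isClosed_and_discrete_iff.1 ⟨hS, hSd⟩ x).mono_right (principal_mono.2 hB)).1

variable [T1Space X]

theorem isClosed_and_isDiscrete_of_subsingleton_inter {S : Set X}
    (h : ∀ x, ∃ U ∈ 𝓝 x, (U ∩ S).Subsingleton) : IsClosed S ∧ IsDiscrete S := by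
  refine isClosed_and_discrete_iff.2 fun x => ?_
  obtain ⟨U, hU, hUS⟩ := h x
  have hfin : ((U ∩ S) \ {x}).Finite := (hUS.anti sdiff_subset).finite
  rw [disjoint_principal_right]
  filter_upwards [mem_nhdsWithin_of_mem_nhds hU,
    mem_nhdsWithin_of_mem_nhds (hfin.isClosed.isOpen_compl.mem_nhds (by simp)),
    self_mem_nhdsWithin] with y hyU hy hyx hyS
  exact hy ⟨⟨hyU, hyS⟩, hyx⟩

theorem countable_image_of_forall_nhds_eq {ι : Type*}
    (hext : ∀ S : Set X, IsClosed S → IsDiscrete S → S.Countable) {f : X → ι} {P : Set X}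
    (h : ∀ x, ∃ U ∈ 𝓝 x, ∀ y ∈ U ∩ P, ∀ z ∈ U ∩ P, f y = f z) : (f '' P).Countable := by
  choose g hgP hfg using fun j : f '' P => j.2
  have hS : IsClosed (range g) ∧ IsDiscrete (range g) := by
    refine isClosed_and_isDiscrete_of_subsingleton_inter fun x => ?_
    obtain ⟨U, hU, hf⟩ := h x
    refine ⟨U, hU, ?_⟩
    rintro _ ⟨hyU, j, rfl⟩ _ ⟨hzU, k, rfl⟩
    rw [Subtype.ext (((hfg j).symm.trans (hf _ ⟨hyU, hgP j⟩ _ ⟨hzU, hgP k⟩)).trans (hfg k))]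
  refine ((hext _ hS.1 hS.2).image f).mono ?_
  rintro j hj
  exact ⟨g ⟨j, hj⟩, mem_range_self _, hfg _⟩

end ClosedDiscrete

def coverStar {Y : Type*} (𝒰 : Set (Set Y)) (x : Y) : Set Y := ⋃₀ {U ∈ 𝒰 | x ∈ U}

theorem subset_coverStar {Y : Type*} {𝒰 : Set (Set Y)} {U : Set Y} {x : Y} (hU : U ∈ 𝒰)
    (hx : x ∈ U) : U ⊆ coverStar 𝒰 x :=
  subset_sUnion_of_mem ⟨hU, hx⟩

section Development

variable {X : Type} [TopologicalSpace X]

open scoped Classical in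
noncomputable def coverCode (G : ℕ → Set (Set X)) (d : ℕ → X) (x : X) : ℕ → ℕ → Bool :=
  fun n m => decide (d m ∈ coverStar (G n) x)

variable {G : ℕ → Set (Set X)}

namespace IsDevelopment

theorem isOpen_coverStar (hG : IsDevelopment X G) (n : ℕ) (x : X) :
    IsOpen (coverStar (G n) x) :=
  isOpen_sUnion fun U hU => hG.1 n U hU.1

theorem mem_coverStar_self (hG : IsDevelopment X G) (n : ℕ) (x : X) :
    x ∈ coverStar (G n) x := by
  obtain ⟨U, hU, hx⟩ := hG.2.1 n x
  exact subset_coverStar hU hx hx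

theorem hasBasis_nhds (hG : IsDevelopment X G) (x : X) :
    (𝓝 x).HasBasis (fun _ => True) fun n => coverStar (G n) x := by
  refine ⟨fun s => ⟨fun hs => ?_, fun ⟨n, _, hn⟩ =>
    mem_of_superset ((hG.isOpen_coverStar n x).mem_nhds (hG.mem_coverStar_self n x)) hn⟩⟩
  obtain ⟨U, hUs, hU, hxU⟩ := mem_nhds_iff.1 hs
  obtain ⟨n, hn⟩ := hG.2.2 x U hU hxU
  exact ⟨n, trivial, sUnion_subset fun V ⟨hV, hxV⟩ => (hn V hV hxV).trans hUs⟩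

-- Send `x` to the least index `i x` with `x ∈ U (i x)` and to a level `n x` with
-- `St(x, G (n x)) ⊆ U (i x)`. A member of `G k` meets points of level `k` of only one index, so the
-- indices used at each level form the image of a closed discrete set.
theorem exists_countable_subcover [T1Space X] (hG : IsDevelopment X G)
    (hext : ∀ S : Set X, IsClosed S → IsDiscrete S → S.Countable) {ι : Type*} [LinearOrder ι]
    [WellFoundedLT ι] (U : ι → Set X) (hU : ∀ i, IsOpen (U i)) (hcov : univ ⊆ ⋃ i, U i) :
    ∃ t : Set ι, t.Countable ∧ univ ⊆ ⋃ i ∈ t, U i := by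
  have hne : ∀ x, {i | x ∈ U i}.Nonempty := fun x => mem_iUnion.1 (hcov (mem_univ x))
  have hwf : WellFounded ((· < ·) : ι → ι → Prop) := wellFounded_lt
  set i : X → ι := fun x => hwf.min _ (hne x)
  have hxi : ∀ x, x ∈ U (i x) := fun x => hwf.min_mem _ (hne x)
  have hi_le : ∀ x j, x ∈ U j → i x ≤ j := fun x j hj => hwf.min_le hj
  choose n hn using fun x => (hG.hasBasis_nhds x).mem_iff.1 ((hU (i x)).mem_nhds (hxi x))
  have hcount : ∀ k, (i '' {x | n x = k}).Countable := by
    intro k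
    refine countable_image_of_forall_nhds_eq hext fun x => ?_
    obtain ⟨V, hV, hxV⟩ := hG.2.1 k x
    refine ⟨V, (hG.1 k V hV).mem_nhds hxV, fun y ⟨hyV, hy⟩ z ⟨hzV, hz⟩ => ?_⟩
    have hyz : y ∈ coverStar (G k) z := subset_coverStar hV hzV hyV
    have hzy : z ∈ coverStar (G k) y := subset_coverStar hV hyV hzV
    rw [← hz] at hyz
    rw [← hy] at hzy
    exact le_antisymm (hi_le y _ ((hn z).2 hyz)) (hi_le z _ ((hn y).2 hzy))
  refine ⟨⋃ k, i '' {x | n x = k}, countable_iUnion hcount, fun x _ => ?_⟩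
  exact mem_biUnion (mem_iUnion.2 ⟨n x, x, rfl, rfl⟩) (hxi x)

theorem lindelofSpace [T1Space X] (hG : IsDevelopment X G)
    (hext : ∀ S : Set X, IsClosed S → IsDiscrete S → S.Countable) : LindelofSpace X := by
  refine ⟨isLindelof_of_countable_subcover fun {ι} U hU hcov => ?_⟩
  obtain ⟨_, _⟩ := exists_wellFoundedLT ι
  exact hG.exists_countable_subcover hext U hU hcov

theorem secondCountableTopology [LindelofSpace X] (hG : IsDevelopment X G) :
    SecondCountableTopology X := by
  choose V hVG hxV using hG.2.1
  choose t htc hcov using fun n => LindelofSpace.elim_nhds_subcover (V n) fun x =>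
    (hG.1 n _ (hVG n x)).mem_nhds (hxV n x)
  refine (isTopologicalBasis_of_isOpen_of_nhds (s := ⋃ n, V n '' t n) ?_ ?_).secondCountableTopology
    (countable_iUnion fun n => (htc n).image _)
  · simp only [mem_iUnion, mem_image]
    rintro _ ⟨n, x, -, rfl⟩
    exact hG.1 n _ (hVG n x)
  · intro a u ha hu
    obtain ⟨n, hn⟩ := hG.2.2 a u hu ha
    obtain ⟨x, hx, hax⟩ := mem_iUnion₂.1 ((hcov n).ge (mem_univ a))
    exact ⟨V n x, mem_iUnion.2 ⟨n, mem_image_of_mem _ hx⟩, hax, hn _ (hVG n x) hax⟩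

theorem exists_isClosed_isDiscrete_not_countable [T1Space X] [RegularSpace X]
    (hG : IsDevelopment X G) (h : ¬ MetrizableSpace X) :
    ∃ D : Set X, IsClosed D ∧ IsDiscrete D ∧ ¬ D.Countable := by
  by_contra! hext
  have := hG.lindelofSpace hext
  have := hG.secondCountableTopology
  exact h inferInstance

theorem exists_isGδ_preimage_coverCode_eq_closure (hG : IsDevelopment X G)
    {d : ℕ → X} (hd : DenseRange d) {U : Set X} (hU : IsOpen U) :
    ∃ S, IsGδ S ∧ coverCode G d ⁻¹' S = closure U := by
  refine ⟨⋂ n, ⋃ m, ⋃ (_ : d m ∈ U), (fun g : ℕ → ℕ → Bool => g n m) ⁻¹' {true},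
    .iInter_of_isOpen fun n => isOpen_iUnion fun m => isOpen_iUnion fun _ =>
      (isOpen_discrete _).preimage ((continuous_apply m).comp (continuous_apply n)), ?_⟩
  ext x
  simp only [mem_preimage, mem_iInter, mem_iUnion, mem_singleton_iff, coverCode,
    decide_eq_true_eq, mem_closure_iff_nhds_basis' (hG.hasBasis_nhds x), forall_const]
  refine forall_congr' fun n => ⟨fun ⟨m, hmU, hm⟩ => ⟨d m, hm, hmU⟩, fun h => ?_⟩
  obtain ⟨m, hm⟩ := hd.exists_mem_open ((hG.isOpen_coverStar n x).inter hU) h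
  exact ⟨m, hm.2, hm.1⟩

end IsDevelopment

end Development

theorem Topology.IsInducing.exists_isGδ_preimage_eq {Y Z : Type*} [TopologicalSpace Y]
    [TopologicalSpace Z] {f : Y → Z} (hf : IsInducing f) {s : Set Y} (hs : IsGδ s) :
    ∃ t, IsGδ t ∧ f ⁻¹' t = s := by
  obtain ⟨U, hU, rfl⟩ := hs.eq_iInter_nat
  choose W hW hWU using fun n => hf.isOpen_iff.1 (hU n)
  exact ⟨⋂ n, W n, .iInter_of_isOpen hW, by simp only [preimage_iInter, hWU]⟩

theorem exists_isEmbedding_cantorSpace_real : ∃ e : (ℕ → ℕ → Bool) → ℝ, IsEmbedding e :=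
  ⟨_, IsEmbedding.subtypeVal.comp (cantorSpaceHomeomorphNatToCantorSpace.symm.trans
    cantorSetHomeomorphNatToBool.symm).isEmbedding⟩

theorem exists_isQSet_not_countable_of_separating {X : Type*} {f : X → ℝ} {D : Set X}
    (hf : ∀ B ⊆ D, ∃ S, IsGδ S ∧ ∀ x ∈ D, f x ∈ S ↔ x ∈ B) (hD : ¬ D.Countable) :
    ∃ A, IsQSet A ∧ ¬ A.Countable := by
  have hinj : InjOn f D := by
    intro x hx y hy hxy
    obtain ⟨S, -, hS⟩ := hf {x} (singleton_subset_iff.2 hx)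
    exact ((hS y hy).1 (hxy ▸ (hS x hx).2 rfl)).symm
  refine ⟨f '' D, fun B hB => ?_, fun h => hD (countable_of_injective_of_countable_image hinj h)⟩
  obtain ⟨S, hS, hSD⟩ := hf (D ∩ f ⁻¹' B) inter_subset_left
  refine ⟨S, hS, Subset.antisymm (fun y hy => ?_) ?_⟩
  · obtain ⟨x, hx, rfl⟩ := hB hy
    exact ⟨(hSD x hx).2 ⟨hx, hy⟩, x, hx, rfl⟩
  · rintro _ ⟨hxS, x, hx, rfl⟩
    exact ((hSD x hx).1 hxS).2

theorem MooreSpace.exists_isQSet_not_countable {X : Type} [TopologicalSpace X]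
    (hM : MooreSpace X) [SeparableSpace X] [NormalSpace X] (h : ¬ MetrizableSpace X) :
    ∃ A, IsQSet A ∧ ¬ A.Countable := by
  obtain ⟨_, _, G, hG⟩ := hM
  obtain ⟨D, hDc, hDd, hD⟩ := hG.exists_isClosed_isDiscrete_not_countable h
  obtain ⟨x₀, -⟩ : D.Nonempty := nonempty_iff_ne_empty.2 fun h => hD (h ▸ countable_empty)
  have : Nonempty X := ⟨x₀⟩
  obtain ⟨d, hd⟩ := exists_dense_seq X
  obtain ⟨e, he⟩ := exists_isEmbedding_cantorSpace_real
  refine exists_isQSet_not_countable_of_separating (f := e ∘ coverCode G d) (fun B hB => ?_) hD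
  obtain ⟨U, hU, hBU, hUD⟩ :=
    normal_exists_closure_subset (hDc.of_subset_isClosed_isDiscrete hDd hB)
      (hDc.of_subset_isClosed_isDiscrete hDd (sdiff_subset (t := B))).isOpen_compl
      fun x hx hxD => hxD.2 hx
  obtain ⟨S, hS, hSU⟩ := hG.exists_isGδ_preimage_coverCode_eq_closure hd hU
  obtain ⟨T, hT, rfl⟩ := he.isInducing.exists_isGδ_preimage_eq hS
  refine ⟨T, hT, fun x hx => ?_⟩
  change x ∈ coverCode G d ⁻¹' (e ⁻¹' T) ↔ x ∈ B
  rw [hSU]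
  exact ⟨fun hxU => by_contra fun hxB => hUD hxU ⟨hx, hxB⟩, fun hxB => subset_closure (hBU hxB)⟩

theorem IsQSet.isGδ {A : Set ℝ} (hA : IsQSet A) (B : Set A) : IsGδ B := by
  obtain ⟨S, hS, hBS⟩ := hA (Subtype.val '' B) (image_subset_range _ _ |>.trans (by simp))
  convert hS.preimage continuous_subtype_val
  rw [← preimage_image_eq B Subtype.val_injective, hBS, preimage_inter,
    Subtype.coe_preimage_self, inter_univ]

theorem exists_radius_forall_le_mem {α : Type*} [PseudoMetricSpace α] {W : ℕ → Set α}
    (hW : ∀ i, IsOpen (W i)) {x : α} (hx : x ∈ ⋂ i, W i) (m : ℕ) :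
    ∃ r > 0, ∀ y, dist y x < r → ∀ i ≤ m, y ∈ W i :=
  Metric.eventually_nhds_iff.1 <| (finite_Iic m).eventually_all.2 fun i _ =>
    (hW i).mem_nhds (mem_iInter.1 hx i)

-- Write `B = ⋂ W i` and `C = ⋂ W' i`. A point `a ∈ B` leaves `W'` at some level `m a`, and a ball
-- of radius `r a` around it stays in `W 0, …, W (m a)`; symmetrically for `b ∈ C`. If `a` and `b`
-- were closer than both radii, the smaller of the two levels would be contradicted.
theorem exists_pos_radius_le_dist_of_isGδ {α : Type*} [PseudoMetricSpace α] {B C : Set α}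
    (hB : IsGδ B) (hC : IsGδ C) (hBC : Disjoint B C) :
    ∃ r : α → ℝ, (∀ x, 0 < r x) ∧ ∀ a ∈ B, ∀ b ∈ C, r a ≤ dist a b ∨ r b ≤ dist a b := by
  obtain ⟨W, hW, rfl⟩ := hB.eq_iInter_nat
  obtain ⟨W', hW', rfl⟩ := hC.eq_iInter_nat
  have key : ∀ x, ∃ m, ∃ r > 0,
      (x ∈ ⋂ i, W i → x ∉ W' m ∧ ∀ y, dist y x < r → ∀ i ≤ m, y ∈ W i) ∧
      (x ∈ ⋂ i, W' i → x ∉ W m ∧ ∀ y, dist y x < r → ∀ i ≤ m, y ∈ W' i) := by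
    intro x
    by_cases hxB : x ∈ ⋂ i, W i
    · have hxC : x ∉ ⋂ i, W' i := hBC.notMem_of_mem_left hxB
      obtain ⟨m, hm⟩ : ∃ m, x ∉ W' m := by simpa using hxC
      obtain ⟨r, hr, hball⟩ := exists_radius_forall_le_mem hW hxB m
      exact ⟨m, r, hr, fun _ => ⟨hm, hball⟩, fun h => (hxC h).elim⟩
    · by_cases hxC : x ∈ ⋂ i, W' i
      · obtain ⟨m, hm⟩ : ∃ m, x ∉ W m := by simpa using hxB
        obtain ⟨r, hr, hball⟩ := exists_radius_forall_le_mem hW' hxC m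
        exact ⟨m, r, hr, fun h => (hxB h).elim, fun _ => ⟨hm, hball⟩⟩
      · exact ⟨0, 1, one_pos, fun h => (hxB h).elim, fun h => (hxC h).elim⟩
  choose m r hr hm using key
  refine ⟨r, hr, fun a ha b hb => ?_⟩
  by_contra! h
  obtain ⟨ha', haW⟩ := (hm a).1 ha
  obtain ⟨hb', hbW⟩ := (hm b).2 hb
  rcases le_total (m a) (m b) with hab | hab
  · exact ha' (hbW a h.2 _ hab)
  · exact hb' (haW b (by rw [dist_comm]; exact h.1) _ hab)

theorem exists_nat_two_div_lt {ε : ℝ} (hε : 0 < ε) : ∃ k : ℕ, 2 / ((k : ℝ) + 1) < ε := by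
  obtain ⟨k, hk⟩ := exists_nat_one_div_lt (half_pos hε)
  exact ⟨k, by linarith [show 2 / ((k : ℝ) + 1) = 2 * (1 / (k + 1)) by ring]⟩

inductive ConeSpace (A : Set ℝ) : Type
  | axis : A → ConeSpace A
  | plane : ℚ → ℚ → ConeSpace A

namespace ConeSpace

variable {A : Set ℝ}

def cone (a : A) (n : ℕ) : Set (ConeSpace A)
  | axis b => b = a
  | plane q t => |(q : ℝ) - a| < t ∧ (t : ℝ) < 1 / (n + 1)

@[simp]
theorem axis_mem_cone {a b : A} {n : ℕ} : axis b ∈ cone a n ↔ b = a := Iff.rfl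

@[simp]
theorem plane_mem_cone {a : A} {n : ℕ} {q t : ℚ} :
    plane q t ∈ cone a n ↔ |(q : ℝ) - a| < t ∧ (t : ℝ) < 1 / (n + 1) := Iff.rfl

theorem axis_mem_cone_self (a : A) (n : ℕ) : axis a ∈ cone a n := rfl

theorem cone_anti {a : A} {m n : ℕ} (h : m ≤ n) : cone a n ⊆ cone a m := by
  rintro (b | ⟨q, t⟩) hx
  · exact hx
  · exact ⟨hx.1, hx.2.trans_le (Nat.one_div_le_one_div h)⟩

theorem exists_plane_notMem_cone (q t : ℚ) : ∃ n, ∀ a : A, plane q t ∉ cone a n := by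
  rcases le_or_gt (t : ℝ) 0 with ht | ht
  · exact ⟨0, fun a h => (abs_nonneg _).not_gt ((plane_mem_cone.1 h).1.trans_le ht)⟩
  · obtain ⟨n, hn⟩ := exists_nat_one_div_lt ht
    exact ⟨n, fun a h => hn.not_gt (plane_mem_cone.1 h).2⟩

theorem disjoint_cone_of_two_div_le_dist {a b : A} (hab : a ≠ b) {n : ℕ}
    (h : 2 / ((n : ℝ) + 1) ≤ dist a b) (m : ℕ) : Disjoint (cone a n) (cone b m) := by
  refine disjoint_left.2 fun x hxa hxb => ?_
  rcases x with c | ⟨q, t⟩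
  · exact hab ((axis_mem_cone.1 hxa).symm.trans (axis_mem_cone.1 hxb))
  rw [plane_mem_cone] at hxa hxb
  rw [Subtype.dist_eq, Real.dist_eq] at h
  have : |(a : ℝ) - b| ≤ |(q : ℝ) - a| + |(q : ℝ) - b| := by
    rw [abs_sub_comm (q : ℝ)]; exact abs_sub_le _ _ _
  have : 2 / ((n : ℝ) + 1) = 2 * (1 / (n + 1)) := by ring
  linarith [hxa.1, hxa.2, hxb.1]

variable (A) in
def coneDev (n : ℕ) : Set (Set (ConeSpace A)) :=
  range (fun a : A => cone a n) ∪ range fun p : ℚ × ℚ => {plane p.1 p.2}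

instance : TopologicalSpace (ConeSpace A) := generateFrom (⋃ n, coneDev A n)

theorem cone_mem_coneDev (a : A) (n : ℕ) : cone a n ∈ coneDev A n := Or.inl ⟨a, rfl⟩

theorem singleton_plane_mem_coneDev (q t : ℚ) (n : ℕ) :
    {plane q t} ∈ coneDev A n := Or.inr ⟨(q, t), rfl⟩

theorem eq_cone_of_axis_mem {n : ℕ} {s : Set (ConeSpace A)} (hs : s ∈ coneDev A n) {a : A}
    (ha : axis a ∈ s) : s = cone a n := by
  rcases hs with ⟨b, rfl⟩ | ⟨p, rfl⟩
  · rw [axis_mem_cone.1 ha]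
  · simp at ha

theorem isTopologicalBasis_coneDev : IsTopologicalBasis (⋃ n, coneDev A n) := by
  refine ⟨?_, sUnion_eq_univ_iff.2 ?_, rfl⟩
  · simp only [mem_iUnion]
    rintro s₁ ⟨n₁, hs₁⟩ s₂ ⟨n₂, hs₂⟩ (a | ⟨q, t⟩) ⟨hx₁, hx₂⟩
    · rw [eq_cone_of_axis_mem hs₁ hx₁, eq_cone_of_axis_mem hs₂ hx₂]
      exact ⟨cone a (max n₁ n₂), ⟨_, cone_mem_coneDev a _⟩, axis_mem_cone_self a _,
        subset_inter (cone_anti (le_max_left _ _)) (cone_anti (le_max_right _ _))⟩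
    · exact ⟨{plane q t}, ⟨0, singleton_plane_mem_coneDev q t 0⟩, rfl,
        singleton_subset_iff.2 ⟨hx₁, hx₂⟩⟩
  · rintro (a | ⟨q, t⟩)
    · exact ⟨cone a 0, mem_iUnion.2 ⟨0, cone_mem_coneDev a 0⟩, axis_mem_cone_self a 0⟩
    · exact ⟨{plane q t}, mem_iUnion.2 ⟨0, singleton_plane_mem_coneDev q t 0⟩, rfl⟩

theorem isOpen_of_mem_coneDev {n : ℕ} {s : Set (ConeSpace A)} (hs : s ∈ coneDev A n) :
    IsOpen s :=
  isOpen_generateFrom_of_mem (mem_iUnion.2 ⟨n, hs⟩)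

theorem isOpen_cone (a : A) (n : ℕ) : IsOpen (cone a n) :=
  isOpen_of_mem_coneDev (cone_mem_coneDev a n)

theorem isOpen_singleton_plane (q t : ℚ) : IsOpen ({plane q t} : Set (ConeSpace A)) :=
  isOpen_of_mem_coneDev (singleton_plane_mem_coneDev q t 0)

theorem mem_nhds_axis {s : Set (ConeSpace A)} {a : A} : s ∈ 𝓝 (axis a) ↔ ∃ n, cone a n ⊆ s := by
  rw [isTopologicalBasis_coneDev.mem_nhds_iff]
  constructor
  · rintro ⟨u, hu, hau, hus⟩
    obtain ⟨n, hn⟩ := mem_iUnion.1 hu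
    exact ⟨n, eq_cone_of_axis_mem hn hau ▸ hus⟩
  · rintro ⟨n, hn⟩
    exact ⟨cone a n, mem_iUnion.2 ⟨n, cone_mem_coneDev a n⟩, axis_mem_cone_self a n, hn⟩

theorem isDevelopment_coneDev : IsDevelopment (ConeSpace A) (coneDev A) := by
  refine ⟨fun n U hU => isOpen_of_mem_coneDev hU, ?_, ?_⟩
  · rintro n (a | ⟨q, t⟩)
    exacts [⟨_, cone_mem_coneDev a n, axis_mem_cone_self a n⟩,
      ⟨_, singleton_plane_mem_coneDev q t n, rfl⟩]
  · rintro (a | ⟨q, t⟩) U hU hxU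
    · obtain ⟨n, hn⟩ := mem_nhds_axis.1 (hU.mem_nhds hxU)
      exact ⟨n, fun V hV haV => eq_cone_of_axis_mem hV haV ▸ hn⟩
    · obtain ⟨n, hn⟩ := exists_plane_notMem_cone (A := A) q t
      refine ⟨n, ?_⟩
      rintro V (⟨a, rfl⟩ | ⟨p, rfl⟩) hV
      · exact (hn a hV).elim
      · exact singleton_subset_iff.2 (hV ▸ hxU)

instance : T1Space (ConeSpace A) := by
  refine t1Space_iff_exists_open.2 fun x y hxy => ?_
  rcases x with a | ⟨q, t⟩
  · rcases y with b | ⟨q, t⟩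
    · exact ⟨cone a 0, isOpen_cone a 0, axis_mem_cone_self a 0,
        fun h => hxy (congrArg axis (axis_mem_cone.1 h).symm)⟩
    · obtain ⟨n, hn⟩ := exists_plane_notMem_cone (A := A) q t
      exact ⟨cone a n, isOpen_cone a n, axis_mem_cone_self a n, hn a⟩
  · exact ⟨{plane q t}, isOpen_singleton_plane q t, rfl, fun h => hxy h.symm⟩

theorem isClosed_cone (a : A) (n : ℕ) : IsClosed (cone a n) := by
  refine isOpen_compl_iff.1 (isOpen_iff_mem_nhds.2 ?_)
  rintro (b | ⟨q, t⟩) hx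
  · have hba : b ≠ a := hx
    obtain ⟨m, hm⟩ := exists_nat_two_div_lt (dist_pos.2 hba)
    exact mem_nhds_axis.2 ⟨m, (disjoint_cone_of_two_div_le_dist hba hm.le n).subset_compl_right⟩
  · exact mem_of_superset ((isOpen_singleton_plane q t).mem_nhds rfl) (singleton_subset_iff.2 hx)

instance : RegularSpace (ConeSpace A) := by
  refine .of_exists_mem_nhds_isClosed_subset fun x s hs => ?_
  rcases x with a | ⟨q, t⟩
  · obtain ⟨n, hn⟩ := mem_nhds_axis.1 hs
    exact ⟨cone a n, mem_nhds_axis.2 ⟨n, subset_rfl⟩, isClosed_cone a n, hn⟩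
  · exact ⟨{plane q t}, (isOpen_singleton_plane q t).mem_nhds rfl, isClosed_singleton,
      singleton_subset_iff.2 (mem_of_mem_nhds hs)⟩

instance : SeparableSpace (ConeSpace A) := by
  refine ⟨⟨range fun p : ℚ × ℚ => plane p.1 p.2, countable_range _, dense_iff_inter_open.2 ?_⟩⟩
  rintro U hU ⟨a | ⟨q, t⟩, hx⟩
  · obtain ⟨n, hn⟩ := mem_nhds_axis.1 (hU.mem_nhds hx)
    obtain ⟨t, ht0, htn⟩ := exists_rat_btwn (show (0 : ℝ) < 1 / (n + 1) by positivity)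
    obtain ⟨q, hq⟩ := exists_rat_btwn (show (a : ℝ) - t < a + t by linarith)
    exact ⟨plane q t, hn ⟨abs_sub_lt_iff.2 ⟨by linarith [hq.2], by linarith [hq.1]⟩, htn⟩,
      (q, t), rfl⟩
  · exact ⟨plane q t, hx, (q, t), rfl⟩

theorem not_metrizableSpace (hA : ¬ A.Countable) : ¬ MetrizableSpace (ConeSpace A) := by
  intro
  let := metrizableSpaceMetric (ConeSpace A)
  have := UniformSpace.secondCountable_of_separable (ConeSpace A)
  have hD : IsDiscrete (range (axis : A → ConeSpace A)) := by
    refine (isClosed_and_isDiscrete_of_subsingleton_inter fun x => ?_).2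
    rcases x with a | ⟨q, t⟩
    · refine ⟨cone a 0, (isOpen_cone a 0).mem_nhds (axis_mem_cone_self a 0), ?_⟩
      rintro _ ⟨hb, b, rfl⟩ _ ⟨hc, c, rfl⟩
      rw [axis_mem_cone.1 hb, axis_mem_cone.1 hc]
    · exact ⟨{plane q t}, (isOpen_singleton_plane q t).mem_nhds rfl,
        subsingleton_singleton.anti inter_subset_left⟩
  have hcount := (HereditarilyLindelofSpace.isLindelof _).countable_of_isDiscrete hD
  rw [← image_univ] at hcount
  exact hA (countable_coe_iff.1 (countable_univ_iff.1
    (countable_of_injective_of_countable_image (fun _ _ _ _ h => axis.inj h) hcount)))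

theorem exists_cone_subset_compl {t : Set (ConeSpace A)} (ht : IsClosed t) :
    ∃ k : A → ℕ, ∀ a, axis a ∉ t → cone a (k a) ⊆ tᶜ := by
  have : ∀ a, ∃ n, axis a ∉ t → cone a n ⊆ tᶜ := fun a => by
    by_cases h : axis a ∈ t
    · exact ⟨0, fun h' => (h' h).elim⟩
    · exact (mem_nhds_axis.1 (ht.isOpen_compl.mem_nhds h)).imp fun _ hn _ => hn
  choose k hk using this
  exact ⟨k, hk⟩

theorem exists_disjoint_cone_of_isQSet (hA : IsQSet A) {B C : Set A} (hBC : Disjoint B C) :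
    ∃ k : A → ℕ, ∀ a ∈ B, ∀ b ∈ C, ∀ n ≥ k a, ∀ m ≥ k b, Disjoint (cone a n) (cone b m) := by
  obtain ⟨r, hr, hrBC⟩ := exists_pos_radius_le_dist_of_isGδ (hA.isGδ B) (hA.isGδ C) hBC
  choose k hk using fun a => exists_nat_two_div_lt (hr a)
  refine ⟨k, fun a ha b hb n hn m hm => ?_⟩
  have hab : a ≠ b := hBC.ne_of_mem ha hb
  have two_div_le : ∀ c, ∀ l ≥ k c, 2 / ((l : ℝ) + 1) ≤ r c := fun c l hl =>
    (div_le_div_of_nonneg_left zero_le_two (by positivity)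
      (by exact_mod_cast Nat.succ_le_succ hl)).trans (hk c).le
  rcases hrBC a ha b hb with h | h
  · exact disjoint_cone_of_two_div_le_dist hab ((two_div_le a n hn).trans h) m
  · rw [dist_comm] at h
    exact (disjoint_cone_of_two_div_le_dist hab.symm ((two_div_le b m hm).trans h) n).symm

def coneNbhd (k : A → ℕ) : ConeSpace A → Set (ConeSpace A)
  | axis a => cone a (k a)
  | plane q t => {plane q t}

theorem isOpen_coneNbhd (k : A → ℕ) (x : ConeSpace A) : IsOpen (coneNbhd k x) := by
  cases x
  exacts [isOpen_cone _ _, isOpen_singleton_plane _ _]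

theorem mem_coneNbhd_self (k : A → ℕ) (x : ConeSpace A) : x ∈ coneNbhd k x := by
  cases x
  exacts [axis_mem_cone_self _ _, rfl]

theorem normalSpace (hA : IsQSet A) : NormalSpace (ConeSpace A) := by
  refine ⟨fun s t hs ht hst => ?_⟩
  obtain ⟨ks, hks⟩ := exists_cone_subset_compl hs
  obtain ⟨kt, hkt⟩ := exists_cone_subset_compl ht
  obtain ⟨kst, hkst⟩ := exists_disjoint_cone_of_isQSet hA (B := {a | axis a ∈ s})
    (C := {a | axis a ∈ t}) (disjoint_left.2 fun a ha hb => disjoint_left.1 hst ha hb)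
  set k : A → ℕ := fun a => max (kst a) (max (ks a) (kt a))
  have hk_s : ∀ a, axis a ∉ s → cone a (k a) ⊆ sᶜ := fun a ha =>
    (cone_anti ((le_max_left _ _).trans (le_max_right _ _))).trans (hks a ha)
  have hk_t : ∀ a, axis a ∉ t → cone a (k a) ⊆ tᶜ := fun a ha =>
    (cone_anti ((le_max_right _ _).trans (le_max_right _ _))).trans (hkt a ha)
  refine ⟨⋃ x ∈ s, coneNbhd k x, ⋃ y ∈ t, coneNbhd k y,
    isOpen_biUnion fun x _ => isOpen_coneNbhd k x, isOpen_biUnion fun y _ => isOpen_coneNbhd k y,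
    fun x hx => mem_biUnion hx (mem_coneNbhd_self k x),
    fun y hy => mem_biUnion hy (mem_coneNbhd_self k y),
    disjoint_iUnion₂_left.2 fun x hx => disjoint_iUnion₂_right.2 fun y hy => ?_⟩
  rcases x with a | ⟨q, u⟩ <;> rcases y with b | ⟨q', u'⟩
  · exact hkst a hx b hy _ (le_max_left _ _) _ (le_max_left _ _)
  · exact disjoint_singleton_right.2 fun h => hk_t a (disjoint_left.1 hst hx) h hy
  · exact disjoint_singleton_left.2 fun h => hk_s b (disjoint_right.1 hst hy) h hx
  · exact disjoint_singleton.2 fun h => disjoint_left.1 hst hx (h ▸ hy)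

end ConeSpace

/-- There exists a separable, normal, nonmetrizable Moore space if and only if there
exists an uncountable Q-set of reals. -/
theorem separable_normal_nonmetrizable_moore_iff_qset :
    (∃ (X : Type) (t : TopologicalSpace X),
        @MooreSpace X t ∧ @TopologicalSpace.SeparableSpace X t ∧ @NormalSpace X t ∧
          ¬ @TopologicalSpace.MetrizableSpace X t) ↔
    (∃ A : Set ℝ, IsQSet A ∧ ¬ A.Countable) := by
  constructor
  · rintro ⟨X, t, hM, hsep, hnorm, hnm⟩
    exact hM.exists_isQSet_not_countable hnm
  · rintro ⟨A, hQ, hA⟩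
    exact ⟨ConeSpace A, inferInstance,
      ⟨inferInstance, inferInstance, _, ConeSpace.isDevelopment_coneDev⟩, inferInstance,
      ConeSpace.normalSpace hQ, ConeSpace.not_metrizableSpace hA⟩
end
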